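/- arXiv:2310.01174 — 3 statements merged into one kernel-verified Lean document; each statement's English description precedes it below -/
import Mathlib

section
/- Let ε>0 and D≥1. Let p0, p1 be probability densities on ℝ^D and let π* be a probability density on ℝ^D×ℝ^D whose first marginal is p0 and whose second marginal is p1, with finite differential entropy H(π*), and such that ⟨x0,x1⟩ is π*-integrable and H(p0) is finite. Let v_θ:ℝ^D→(0,∞) be measurable with c_θ(x0):=∫_{ℝ^D} exp(⟨x0,x1⟩/ε) v_θ(x1) dx1 finite and positive for p0-almost every x0, and define π_θ(x0,x1) = p0(x0)·exp(⟨x0,x1⟩/ε)·v_θ(x1)/c_θ(x0). Assume log c_θ is p0-integrable and log v_θ is p1-integrable. Then KL(π*‖π_θ) = L(θ) − L*, where L(θ) = ∫ log c_θ(x0) p0(x0) dx0 − ∫ log v_θ(x1) p1(x1) dx1 and L* = H(π*) − H(p0) + ε^{-1} ∫⟨x0,x1⟩ π*(x0,x1) dx0 dx1. -/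
open MeasureTheory Real Matrix

section helpers

variable {α β : Type*} [MeasurableSpace α] [MeasurableSpace β]
  {μ : Measure α} {ν : Measure β}

lemma marg_key [SFinite μ] [SFinite ν] {πs : α × β → ℝ} {p g : α → ℝ}
    (hπm : Measurable πs) (hπnn : ∀ z, 0 ≤ πs z)
    (hπint : Integrable πs (μ.prod ν))
    (hmarg : ∀ᵐ x ∂μ, (∫ y, πs (x, y) ∂ν) = p x)
    (hgm : Measurable g)
    (hpg : Integrable (fun x => p x * g x) μ)
    (hpnn : ∀ x, 0 ≤ p x) :
    Integrable (fun z => πs z * g z.1) (μ.prod ν) ∧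
      ∫ z, πs z * g z.1 ∂(μ.prod ν) = ∫ x, p x * g x ∂μ := by
  have hsec := hπint.prod_right_ae
  have hmeas : Measurable fun z : α × β => πs z * g z.1 :=
    hπm.mul (hgm.comp measurable_fst)
  have hlin : ∀ᵐ x ∂μ, ∫⁻ y, ENNReal.ofReal (πs (x, y)) ∂ν = ENNReal.ofReal (p x) := by
    filter_upwards [hmarg, hsec] with x hx hint
    rw [← ofReal_integral_eq_lintegral_ofReal hint
      (Filter.Eventually.of_forall fun y => hπnn _), hx]
  have hint : Integrable (fun z => πs z * g z.1) (μ.prod ν) := by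
    refine ⟨hmeas.aestronglyMeasurable, ?_⟩
    rw [hasFiniteIntegral_iff_norm]
    have h1 : ∀ z : α × β, ENNReal.ofReal ‖πs z * g z.1‖ =
        ENNReal.ofReal (πs z) * ENNReal.ofReal |g z.1| := by
      intro z
      rw [Real.norm_eq_abs, abs_mul, abs_of_nonneg (hπnn z), ENNReal.ofReal_mul (hπnn z)]
    simp_rw [h1]
    have hmeas2 : Measurable fun z : α × β => ENNReal.ofReal (πs z) * ENNReal.ofReal |g z.1| :=
      hπm.ennreal_ofReal.mul ((hgm.comp measurable_fst).abs.ennreal_ofReal)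
    rw [MeasureTheory.lintegral_prod _ hmeas2.aemeasurable]
    have h2 : ∀ᵐ x ∂μ, ∫⁻ y, ENNReal.ofReal (πs (x, y)) * ENNReal.ofReal |g x| ∂ν
        = ENNReal.ofReal ‖p x * g x‖ := by
      filter_upwards [hlin] with x hx
      have hm3 : AEMeasurable (fun y => ENNReal.ofReal (πs (x, y))) ν :=
        ((hπm.comp measurable_prodMk_left).ennreal_ofReal).aemeasurable
      rw [lintegral_mul_const'' _ hm3, hx, ← ENNReal.ofReal_mul (hpnn x), Real.norm_eq_abs, abs_mul,
        abs_of_nonneg (hpnn x)]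
    rw [lintegral_congr_ae h2, ← hasFiniteIntegral_iff_norm]
    exact hpg.hasFiniteIntegral
  refine ⟨hint, ?_⟩
  rw [MeasureTheory.integral_prod _ hint]
  refine integral_congr_ae ?_
  filter_upwards [hmarg] with x hx
  rw [integral_mul_const, hx, mul_comm]

lemma marg_key2 [SFinite μ] [SFinite ν] {πs : α × β → ℝ} {p g : β → ℝ}
    (hπm : Measurable πs) (hπnn : ∀ z, 0 ≤ πs z)
    (hπint : Integrable πs (μ.prod ν))
    (hmarg : ∀ᵐ y ∂ν, (∫ x, πs (x, y) ∂μ) = p y)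
    (hgm : Measurable g)
    (hpg : Integrable (fun y => p y * g y) ν)
    (hpnn : ∀ y, 0 ≤ p y) :
    Integrable (fun z => πs z * g z.2) (μ.prod ν) ∧
      ∫ z, πs z * g z.2 ∂(μ.prod ν) = ∫ y, p y * g y ∂ν := by
  have h := marg_key (πs := fun z : β × α => πs z.swap) (p := p) (g := g)
    (hπm.comp measurable_swap) (fun z => hπnn _) hπint.swap hmarg hgm hpg hpnn
  obtain ⟨h1, h2⟩ := h
  constructor
  · have := h1.swap
    simpa [Function.comp_def] using this
  · rw [← h2, ← MeasureTheory.integral_prod_swap]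
    rfl

end helpers


/-- For the parameterization
`π_θ(x0,x1) = p0(x0) · exp(⟨x0,x1⟩/ε) · v_θ(x1) / c_θ(x0)`, the KL divergence
`KL(π*‖π_θ)` equals `L(θ) − L*`, where
`L(θ) = ∫ log c_θ dp0 − ∫ log v_θ dp1` and
`L* = H(π*) − H(p0) + ε⁻¹ ∫ ⟨x0,x1⟩ dπ*`. -/
theorem kl_eq_loss_sub_const
    (D : ℕ) (hD : 1 ≤ D) (ε : ℝ) (hε : 0 < ε)
    (p0 p1 : (Fin D → ℝ) → ℝ)
    (πs : ((Fin D → ℝ) × (Fin D → ℝ)) → ℝ)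
    (vθ cθ : (Fin D → ℝ) → ℝ)
    -- p0 and p1 are probability densities on ℝ^D
    (hp0m : Measurable p0) (hp0nn : ∀ x, 0 ≤ p0 x)
    (hp0int : Integrable p0) (hp0one : ∫ x, p0 x = 1)
    (hp1m : Measurable p1) (hp1nn : ∀ x, 0 ≤ p1 x)
    (hp1int : Integrable p1) (hp1one : ∫ x, p1 x = 1)
    -- π* is a probability density on ℝ^D × ℝ^D
    (hπm : Measurable πs) (hπnn : ∀ z, 0 ≤ πs z)
    (hπint : Integrable πs) (hπone : ∫ z, πs z = 1)
    -- with first marginal p0 and second marginal p1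
    (hmarg0 : ∀ᵐ x0 ∂(volume : Measure (Fin D → ℝ)), (∫ x1, πs (x0, x1)) = p0 x0)
    (hmarg1 : ∀ᵐ x1 ∂(volume : Measure (Fin D → ℝ)), (∫ x0, πs (x0, x1)) = p1 x1)
    -- finite differential entropy H(π*), finite H(p0), ⟨x0,x1⟩ π*-integrable
    (hHπ : Integrable (fun z => πs z * Real.log (πs z)))
    (hHp0 : Integrable (fun x => p0 x * Real.log (p0 x)))
    (hinner : Integrable (fun z : (Fin D → ℝ) × (Fin D → ℝ) => πs z * (z.1 ⬝ᵥ z.2)))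
    -- v_θ is measurable and positive
    (hvm : Measurable vθ) (hvpos : ∀ x, 0 < vθ x)
    -- c_θ is the normalization, finite and positive p0-a.e.
    (hcθ : ∀ x0, cθ x0 = ∫ x1, Real.exp ((x0 ⬝ᵥ x1) / ε) * vθ x1)
    (hcfin : ∀ᵐ x0 ∂(volume : Measure (Fin D → ℝ)), p0 x0 ≠ 0 →
      Integrable (fun x1 => Real.exp ((x0 ⬝ᵥ x1) / ε) * vθ x1) ∧ 0 < cθ x0)
    -- log c_θ is p0-integrable and log v_θ is p1-integrable
    (hlogc : Integrable (fun x0 => p0 x0 * Real.log (cθ x0)))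
    (hlogv : Integrable (fun x1 => p1 x1 * Real.log (vθ x1))) :
    -- KL(π*‖π_θ) = L(θ) − L*
    (∫ z : (Fin D → ℝ) × (Fin D → ℝ),
        πs z * Real.log (πs z /
          (p0 z.1 * Real.exp ((z.1 ⬝ᵥ z.2) / ε) * vθ z.2 / cθ z.1)))
      =
      ((∫ x0, p0 x0 * Real.log (cθ x0)) - ∫ x1, p1 x1 * Real.log (vθ x1))
        -
      ((-(∫ z : (Fin D → ℝ) × (Fin D → ℝ), πs z * Real.log (πs z)))
        - (-(∫ x, p0 x * Real.log (p0 x)))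
        + ε⁻¹ * ∫ z : (Fin D → ℝ) × (Fin D → ℝ), πs z * (z.1 ⬝ᵥ z.2)) := by
  have hvol : (volume : Measure ((Fin D → ℝ) × (Fin D → ℝ)))
      = (volume : Measure (Fin D → ℝ)).prod volume := MeasureTheory.Measure.volume_eq_prod _ _
  rw [hvol] at hπint hHπ hinner ⊢
  have hdot : Measurable fun z : (Fin D → ℝ) × (Fin D → ℝ) => z.1 ⬝ᵥ z.2 := by
    simp only [dotProduct]
    exact Finset.measurable_sum _ fun i _ =>
      ((measurable_pi_apply i).comp measurable_fst).mul
        ((measurable_pi_apply i).comp measurable_snd)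
  have hkm : Measurable fun z : (Fin D → ℝ) × (Fin D → ℝ) =>
      Real.exp ((z.1 ⬝ᵥ z.2) / ε) * vθ z.2 := by
    exact ((hdot.div_const ε).exp).mul (hvm.comp measurable_snd)
  have hcm : Measurable cθ := by
    have h : cθ = fun x0 => ∫ x1, Real.exp ((x0 ⬝ᵥ x1) / ε) * vθ x1 := funext hcθ
    rw [h]
    exact (hkm.stronglyMeasurable.integral_prod_right').measurable
  have hae : ∀ᵐ z ∂((volume : Measure (Fin D → ℝ)).prod volume),
      πs z = 0 ∨ (0 < p0 z.1 ∧ 0 < cθ z.1) := by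
    rw [MeasureTheory.Measure.ae_prod_iff_ae_ae]
    · filter_upwards [hcfin, hmarg0, hπint.prod_right_ae] with x hc hm hint
      by_cases hp : p0 x = 0
      · have hz : (fun y => πs (x, y)) =ᵐ[volume] 0 :=
          (integral_eq_zero_iff_of_nonneg (fun y => hπnn _) hint).mp (by rw [hm, hp])
        filter_upwards [hz] with y hy
        exact Or.inl hy
      · exact Filter.Eventually.of_forall fun y =>
          Or.inr ⟨lt_of_le_of_ne (hp0nn x) (Ne.symm hp), (hc hp).2⟩
    · have h1 : MeasurableSet {z : (Fin D → ℝ) × (Fin D → ℝ) | πs z = 0} := by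
        exact hπm (measurableSet_singleton 0)
      have h2 : MeasurableSet {z : (Fin D → ℝ) × (Fin D → ℝ) | 0 < p0 z.1} := by
        exact measurableSet_lt measurable_const (hp0m.comp measurable_fst)
      have h3 : MeasurableSet {z : (Fin D → ℝ) × (Fin D → ℝ) | 0 < cθ z.1} := by
        exact measurableSet_lt measurable_const (hcm.comp measurable_fst)
      exact h1.union (h2.inter h3)
  have hptw : ∀ᵐ z ∂((volume : Measure (Fin D → ℝ)).prod volume),
      πs z * Real.log (πs z /
          (p0 z.1 * Real.exp ((z.1 ⬝ᵥ z.2) / ε) * vθ z.2 / cθ z.1))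
      = πs z * Real.log (πs z) - πs z * Real.log (p0 z.1)
        - (πs z * (z.1 ⬝ᵥ z.2)) * ε⁻¹ - πs z * Real.log (vθ z.2)
        + πs z * Real.log (cθ z.1) := by
    filter_upwards [hae] with z hz
    by_cases h0 : πs z = 0
    · simp [h0]
    · rcases hz with h0' | ⟨hp, hc⟩
      · exact absurd h0' h0
      have he : (0:ℝ) < Real.exp ((z.1 ⬝ᵥ z.2) / ε) := Real.exp_pos _
      have hv := hvpos z.2
      rw [Real.log_div h0 (ne_of_gt (div_pos (mul_pos (mul_pos hp he) hv) hc)),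
        Real.log_div (ne_of_gt (mul_pos (mul_pos hp he) hv)) (ne_of_gt hc),
        Real.log_mul (ne_of_gt (mul_pos hp he)) (ne_of_gt hv),
        Real.log_mul (ne_of_gt hp) (ne_of_gt he), Real.log_exp]
      field_simp
      ring
  have hB := marg_key (g := fun x => Real.log (p0 x)) hπm hπnn hπint hmarg0
    hp0m.log hHp0 hp0nn
  have hEc := marg_key (g := fun x => Real.log (cθ x)) hπm hπnn hπint hmarg0
    hcm.log hlogc hp0nn
  have hDv := marg_key2 (g := fun x => Real.log (vθ x)) hπm hπnn hπint hmarg1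
    hvm.log hlogv hp1nn
  have hC : Integrable (fun z : (Fin D → ℝ) × (Fin D → ℝ) => (πs z * (z.1 ⬝ᵥ z.2)) * ε⁻¹)
      ((volume : Measure (Fin D → ℝ)).prod volume) := hinner.mul_const _
  have hCval : ∫ z : (Fin D → ℝ) × (Fin D → ℝ), (πs z * (z.1 ⬝ᵥ z.2)) * ε⁻¹
        ∂((volume : Measure (Fin D → ℝ)).prod volume)
      = ε⁻¹ * ∫ z : (Fin D → ℝ) × (Fin D → ℝ), πs z * (z.1 ⬝ᵥ z.2)
        ∂((volume : Measure (Fin D → ℝ)).prod volume) := by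
    rw [integral_mul_const, mul_comm]
  have hBint : Integrable (fun z : (Fin D → ℝ) × (Fin D → ℝ) => πs z * Real.log (p0 z.1))
      ((volume : Measure (Fin D → ℝ)).prod volume) := hB.1
  have hEcint : Integrable (fun z : (Fin D → ℝ) × (Fin D → ℝ) => πs z * Real.log (cθ z.1))
      ((volume : Measure (Fin D → ℝ)).prod volume) := hEc.1
  have hDvint : Integrable (fun z : (Fin D → ℝ) × (Fin D → ℝ) => πs z * Real.log (vθ z.2))
      ((volume : Measure (Fin D → ℝ)).prod volume) := hDv.1
  have hBval : (∫ z : (Fin D → ℝ) × (Fin D → ℝ), πs z * Real.log (p0 z.1)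
      ∂((volume : Measure (Fin D → ℝ)).prod volume)) = ∫ x, p0 x * Real.log (p0 x) := hB.2
  have hEcval : (∫ z : (Fin D → ℝ) × (Fin D → ℝ), πs z * Real.log (cθ z.1)
      ∂((volume : Measure (Fin D → ℝ)).prod volume)) = ∫ x, p0 x * Real.log (cθ x) := hEc.2
  have hDvval : (∫ z : (Fin D → ℝ) × (Fin D → ℝ), πs z * Real.log (vθ z.2)
      ∂((volume : Measure (Fin D → ℝ)).prod volume)) = ∫ x, p1 x * Real.log (vθ x) := hDv.2
  have h2 : Integrable (fun z : (Fin D → ℝ) × (Fin D → ℝ) =>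
      πs z * Real.log (πs z) - πs z * Real.log (p0 z.1))
      ((volume : Measure (Fin D → ℝ)).prod volume) := by exact hHπ.sub hBint
  have h3 : Integrable (fun z : (Fin D → ℝ) × (Fin D → ℝ) =>
      πs z * Real.log (πs z) - πs z * Real.log (p0 z.1) - (πs z * (z.1 ⬝ᵥ z.2)) * ε⁻¹)
      ((volume : Measure (Fin D → ℝ)).prod volume) := by exact h2.sub hC
  have h4 : Integrable (fun z : (Fin D → ℝ) × (Fin D → ℝ) =>
      πs z * Real.log (πs z) - πs z * Real.log (p0 z.1) - (πs z * (z.1 ⬝ᵥ z.2)) * ε⁻¹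
        - πs z * Real.log (vθ z.2))
      ((volume : Measure (Fin D → ℝ)).prod volume) := by exact h3.sub hDvint
  rw [integral_congr_ae hptw]
  rw [integral_add h4 hEcint, integral_sub h3 hDvint, integral_sub h2 hC,
    integral_sub hHπ hBint]
  rw [hBval, hEcval, hDvval, hCval]
  ring
end

section
/- Let ε>0 and D≥1. Let p0, p1 be probability densities on ℝ^D with p1 supported in a set Y⊆ℝ^D. For a measurable function f:ℝ^D→ℝ define Z^f(x0) = ∫_{ℝ^D} exp((f(x1) − ½‖x0−x1‖²)/ε) dx1 and J(f) = −ε ∫ log Z^f(x0) p0(x0) dx0 + ∫ f(x1) p1(x1) dx1. Let f̂, f̃:ℝ^D→ℝ be measurable functions such that f̃(x1) ≤ f̂(x1) for all x1∈ℝ^D and f̃(x1) = f̂(x1) for all x1∈Y, and assume that for all x0, Z^{f̂}(x0) and Z^{f̃}(x0) are finite and positive, that log Z^{f̂} and log Z^{f̃} are p0-integrable, and that f̂ is p1-integrable. Then J(f̃) ≥ J(f̂). -/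
open MeasureTheory Real Matrix

/-- With `Z^f(x0) = ∫ exp((f(x1) − ½‖x0−x1‖²)/ε) dx1` and
`J(f) = −ε ∫ log Z^f dp0 + ∫ f dp1`, if `f̃ ≤ f̂` everywhere and `f̃ = f̂` on the
support `Y` of `p1`, then `J(f̃) ≥ J(f̂)`. -/
theorem weak_dual_value_monotone
    (D : ℕ) (hD : 1 ≤ D) (ε : ℝ) (hε : 0 < ε)
    (p0 p1 : (Fin D → ℝ) → ℝ) (Y : Set (Fin D → ℝ))
    (hp0m : Measurable p0) (hp0nn : ∀ x, 0 ≤ p0 x)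
    (hp0int : Integrable p0) (hp0one : ∫ x, p0 x = 1)
    (hp1m : Measurable p1) (hp1nn : ∀ x, 0 ≤ p1 x)
    (hp1int : Integrable p1) (hp1one : ∫ x, p1 x = 1)
    -- p1 is supported in Y
    (hsupp : ∀ x ∉ Y, p1 x = 0)
    (fhat ftil : (Fin D → ℝ) → ℝ)
    (hfhatm : Measurable fhat) (hftilm : Measurable ftil)
    (hle : ∀ x, ftil x ≤ fhat x) (heq : ∀ x ∈ Y, ftil x = fhat x)
    (Z : ((Fin D → ℝ) → ℝ) → (Fin D → ℝ) → ℝ)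
    (hZ : ∀ f x0, Z f x0 =
      ∫ x1 : Fin D → ℝ,
        Real.exp ((f x1 - (1 / 2) * ((x0 - x1) ⬝ᵥ (x0 - x1))) / ε))
    -- Z^{f̂}, Z^{f̃} are finite and positive for all x0
    (hZhat : ∀ x0, Integrable (fun x1 : Fin D → ℝ =>
        Real.exp ((fhat x1 - (1 / 2) * ((x0 - x1) ⬝ᵥ (x0 - x1))) / ε))
      ∧ 0 < Z fhat x0)
    (hZtil : ∀ x0, Integrable (fun x1 : Fin D → ℝ =>
        Real.exp ((ftil x1 - (1 / 2) * ((x0 - x1) ⬝ᵥ (x0 - x1))) / ε))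
      ∧ 0 < Z ftil x0)
    -- log Z^{f̂}, log Z^{f̃} are p0-integrable, f̂ is p1-integrable
    (hlogZhat : Integrable (fun x0 => p0 x0 * Real.log (Z fhat x0)))
    (hlogZtil : Integrable (fun x0 => p0 x0 * Real.log (Z ftil x0)))
    (hfint : Integrable (fun x1 => p1 x1 * fhat x1)) :
    (-ε * ∫ x0, p0 x0 * Real.log (Z fhat x0)) + (∫ x1, p1 x1 * fhat x1)
      ≤ (-ε * ∫ x0, p0 x0 * Real.log (Z ftil x0)) + (∫ x1, p1 x1 * ftil x1) := by
  have h1 : (∫ x1, p1 x1 * ftil x1) = ∫ x1, p1 x1 * fhat x1 := by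
    congr 1; funext x
    by_cases hx : x ∈ Y
    · rw [heq x hx]
    · rw [hsupp x hx]; ring
  have h2 : ∀ x0, Z ftil x0 ≤ Z fhat x0 := by
    intro x0
    rw [hZ, hZ]
    apply integral_mono (hZtil x0).1 (hZhat x0).1
    intro x
    apply Real.exp_le_exp.2
    gcongr
    exact hle x
  have h3 : (∫ x0, p0 x0 * Real.log (Z ftil x0)) ≤ ∫ x0, p0 x0 * Real.log (Z fhat x0) := by
    apply integral_mono hlogZtil hlogZhat
    intro x0
    exact mul_le_mul_of_nonneg_left (Real.log_le_log (hZtil x0).2 (h2 x0)) (hp0nn x0)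
  rw [h1]
  nlinarith [h3]
end

section
/- Let D≥1, K≥1, and fix constants 0<u≤U, V>0, w_low ≤ w_high, 0<a≤A, and P>0. Let V be the class of functions ℝ^D→ℝ of the form x ↦ log Σ_{k=1}^K α_k exp(xᵀU_k x + v_kᵀ x + w_k) with symmetric u·I_D ⪯ U_k ⪯ U·I_D, ‖v_k‖ ≤ V, w_low ≤ w_k ≤ w_high, a ≤ α_k ≤ A. Let p be a probability distribution on ℝ^D whose support is contained in the closed ball of radius P centered at 0. Then there exists a constant C, depending only on K, u, U, a, A, V, w_low, w_high, P (and D) but not on N, such that for every N≥1 the Rademacher complexity satisfies R_N(V, p) ≤ C/√N. -/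
open MeasureTheory Real Matrix
open scoped ENNReal

noncomputable section
namespace RadHelper



def eps (b : Bool) : ℝ := if b then 1 else -1

lemma eps_abs (b : Bool) : |eps b| = 1 := by cases b <;> simp [eps]
lemma eps_sq (b : Bool) : eps b * eps b = 1 := by cases b <;> norm_num [eps]
lemma eps_not (b : Bool) : eps (!b) = - eps b := by cases b <;> simp [eps]

lemma bdd_range {Θ : Sort*} (f : Θ → ℝ) (c : ℝ) (h : ∀ θ, f θ ≤ c) :
    BddAbove (Set.range f) := ⟨c, by rintro _ ⟨θ, rfl⟩; exact h θ⟩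

variable {N : ℕ}

lemma sum_eps_mul (i j : Fin N) (hij : i ≠ j) :
    ∑ s : Fin N → Bool, eps (s i) * eps (s j) = 0 := by
  refine Finset.sum_involution (fun s _ => Function.update s i (!(s i))) ?_ ?_
    (fun s _ => Finset.mem_univ _) ?_
  · intro s _
    have h1 : Function.update s i (!(s i)) i = !(s i) := Function.update_self _ _ _
    have h2 : Function.update s i (!(s i)) j = s j := Function.update_of_ne (Ne.symm hij) _ _
    show eps (s i) * eps (s j) +
      eps (Function.update s i (!(s i)) i) * eps (Function.update s i (!(s i)) j) = 0
    rw [h1, h2, eps_not]; ring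
  · intro s _ _
    intro h
    have := congrFun h i
    simp at this
  · intro s _
    funext m
    by_cases hm : m = i
    · subst hm; simp
    · simp [Function.update_of_ne hm]

lemma sum_eps_sq (c : Fin N → ℝ) :
    ∑ s : Fin N → Bool, (∑ i, eps (s i) * c i) ^ 2 = 2 ^ N * ∑ i, (c i) ^ 2 := by
  have key : ∀ i j : Fin N, ∑ s : Fin N → Bool, (eps (s i) * c i) * (eps (s j) * c j)
      = if j = i then 2 ^ N * (c i) ^ 2 else 0 := by
    intro i j
    have : ∀ s : Fin N → Bool, (eps (s i) * c i) * (eps (s j) * c j)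
        = (eps (s i) * eps (s j)) * (c i * c j) := by intro s; ring
    rw [Finset.sum_congr rfl (fun s _ => this s), ← Finset.sum_mul]
    by_cases h : j = i
    · subst h
      have : ∀ s : Fin N → Bool, eps (s j) * eps (s j) = 1 := fun s => eps_sq _
      rw [Finset.sum_congr rfl (fun s _ => this s)]
      simp [Finset.card_univ, sq]
    · rw [sum_eps_mul i j (fun hh => h hh.symm)]
      simp [h]
  calc ∑ s : Fin N → Bool, (∑ i, eps (s i) * c i) ^ 2
      = ∑ s : Fin N → Bool, ∑ i, ∑ j, (eps (s i) * c i) * (eps (s j) * c j) := by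
        apply Finset.sum_congr rfl; intro s _
        rw [sq, Finset.sum_mul_sum]
    _ = ∑ i, ∑ j, ∑ s : Fin N → Bool, (eps (s i) * c i) * (eps (s j) * c j) := by
        rw [Finset.sum_comm]
        apply Finset.sum_congr rfl; intro i _
        rw [Finset.sum_comm]
    _ = ∑ i : Fin N, 2 ^ N * (c i) ^ 2 := by
        apply Finset.sum_congr rfl; intro i _
        rw [Finset.sum_congr rfl (fun j _ => key i j)]
        simp
    _ = 2 ^ N * ∑ i, (c i) ^ 2 := by rw [Finset.mul_sum]

lemma khintchine (c : Fin N → ℝ) (b : ℝ) (hb : 0 ≤ b) (hc : ∀ i, |c i| ≤ b) :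
    ∑ s : Fin N → Bool, |∑ i, eps (s i) * c i| ≤ 2 ^ N * (Real.sqrt N * b) := by
  set T := ∑ s : Fin N → Bool, |∑ i, eps (s i) * c i| with hT
  have hTnn : 0 ≤ T := Finset.sum_nonneg fun s _ => abs_nonneg _
  have hsq : T ^ 2 ≤ (2:ℝ) ^ N * (2 ^ N * ∑ i, (c i) ^ 2) := by
    have h1 : T ^ 2 = (∑ s : Fin N → Bool, 1 * |∑ i, eps (s i) * c i|) ^ 2 := by
      simp [hT]
    have h2 := Finset.sum_mul_sq_le_sq_mul_sq Finset.univ (fun _ : Fin N → Bool => (1:ℝ))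
      (fun s => |∑ i, eps (s i) * c i|)
    rw [h1]
    calc (∑ s : Fin N → Bool, 1 * |∑ i, eps (s i) * c i|) ^ 2
        ≤ (∑ _s : Fin N → Bool, (1:ℝ) ^ 2) * ∑ s : Fin N → Bool, |∑ i, eps (s i) * c i| ^ 2 := h2
      _ = 2 ^ N * ∑ s : Fin N → Bool, (∑ i, eps (s i) * c i) ^ 2 := by
          simp [Finset.card_univ, sq_abs]
      _ = 2 ^ N * (2 ^ N * ∑ i, (c i) ^ 2) := by rw [sum_eps_sq]
  have hcsq : ∑ i, (c i) ^ 2 ≤ N * b ^ 2 := by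
    calc ∑ i, (c i) ^ 2 ≤ ∑ _i : Fin N, b ^ 2 := by
          apply Finset.sum_le_sum; intro i _
          calc (c i) ^ 2 = |c i| ^ 2 := (sq_abs _).symm
            _ ≤ b ^ 2 := by apply pow_le_pow_left₀ (abs_nonneg _) (hc i)
      _ = N * b ^ 2 := by simp [Finset.card_univ]
  have hR : (0:ℝ) ≤ 2 ^ N * (Real.sqrt N * b) :=
    mul_nonneg (by positivity) (mul_nonneg (Real.sqrt_nonneg _) hb)
  have hsq2 : T ^ 2 ≤ (2 ^ N * (Real.sqrt N * b)) ^ 2 := by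
    have : (2 ^ N * (Real.sqrt N * b)) ^ 2 = 2 ^ N * (2 ^ N * ((N:ℝ) * b ^ 2)) := by
      have hs : Real.sqrt N ^ 2 = (N:ℝ) := Real.sq_sqrt (Nat.cast_nonneg N)
      rw [mul_pow, mul_pow, hs]; ring
    rw [this]
    calc T ^ 2 ≤ (2:ℝ) ^ N * (2 ^ N * ∑ i, (c i) ^ 2) := hsq
      _ ≤ 2 ^ N * (2 ^ N * ((N:ℝ) * b ^ 2)) := by
          apply mul_le_mul_of_nonneg_left _ (by positivity)
          apply mul_le_mul_of_nonneg_left hcsq (by positivity)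
  calc T = Real.sqrt (T ^ 2) := (Real.sqrt_sq hTnn).symm
    _ ≤ Real.sqrt ((2 ^ N * (Real.sqrt N * b)) ^ 2) := Real.sqrt_le_sqrt hsq2
    _ = 2 ^ N * (Real.sqrt N * b) := Real.sqrt_sq hR







lemma pair_sup {Θ : Type*} [Nonempty Θ] (B G φv : Θ → ℝ) (L : ℝ)
    (hLip : ∀ θ θ', |φv θ - φv θ'| ≤ L * |G θ - G θ'|)
    (b1 : BddAbove (Set.range fun θ => B θ + L * G θ))
    (b2 : BddAbove (Set.range fun θ => B θ - L * G θ)) :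
    (⨆ θ, B θ + φv θ) + (⨆ θ, B θ - φv θ)
      ≤ (⨆ θ, B θ + L * G θ) + (⨆ θ, B θ - L * G θ) := by
  set R := (⨆ θ, B θ + L * G θ) + (⨆ θ, B θ - L * G θ) with hR
  have key : ∀ θ θ', (B θ + φv θ) + (B θ' - φv θ') ≤ R := by
    intro θ θ'
    have hd : φv θ - φv θ' ≤ L * |G θ - G θ'| := le_trans (le_abs_self _) (hLip θ θ')
    rcases le_total (G θ') (G θ) with h | h
    · have habs : L * |G θ - G θ'| = L * G θ - L * G θ' := by
        rw [abs_of_nonneg (by linarith)]; ring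
      have h1 := le_ciSup b1 θ
      have h2 := le_ciSup b2 θ'
      rw [habs] at hd; linarith
    · have habs : L * |G θ - G θ'| = L * G θ' - L * G θ := by
        rw [abs_of_nonpos (by linarith)]; ring
      have h1 := le_ciSup b1 θ'
      have h2 := le_ciSup b2 θ
      rw [habs] at hd; linarith
  have step : ∀ θ, (B θ + φv θ) + (⨆ θ', B θ' - φv θ') ≤ R := by
    intro θ
    have : (⨆ θ', B θ' - φv θ') ≤ R - (B θ + φv θ) :=
      ciSup_le fun θ' => by linarith [key θ θ']
    linarith
  have : (⨆ θ, B θ + φv θ) ≤ R - (⨆ θ', B θ' - φv θ') :=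
    ciSup_le fun θ => by linarith [step θ]
  linarith

lemma contraction {Θ : Type*} [Nonempty Θ] {N : ℕ} (g : Θ → Fin N → ℝ) (φ : ℝ → ℝ)
    (L Mb : ℝ) (hL : 0 ≤ L) (hMb : 0 ≤ Mb)
    (hg : ∀ θ i, |g θ i| ≤ Mb) (hφg : ∀ θ i, |φ (g θ i)| ≤ Mb)
    (hLip : ∀ θ θ' i, |φ (g θ i) - φ (g θ' i)| ≤ L * |g θ i - g θ' i|) :
    ∑ s : Fin N → Bool, (⨆ θ, ∑ i, eps (s i) * φ (g θ i))
      ≤ ∑ s : Fin N → Bool, ⨆ θ, ∑ i, eps (s i) * (L * g θ i) := by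
  classical
  set m : Finset (Fin N) → Θ → Fin N → ℝ :=
    fun A θ i => if i ∈ A then L * g θ i else φ (g θ i) with hm
  have hmb : ∀ A θ i, |m A θ i| ≤ L * Mb + Mb := by
    intro A θ i
    by_cases hi : i ∈ A
    · simp only [hm, if_pos hi]
      rw [abs_mul, abs_of_nonneg hL]
      have := hg θ i
      nlinarith [abs_nonneg (g θ i)]
    · simp only [hm, if_neg hi]
      have := hφg θ i
      nlinarith
  have hterm : ∀ A (s : Fin N → Bool) θ i, eps (s i) * m A θ i ≤ L * Mb + Mb := by
    intro A s θ i
    calc eps (s i) * m A θ i ≤ |eps (s i) * m A θ i| := le_abs_self _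
      _ = |m A θ i| := by rw [abs_mul, eps_abs, one_mul]
      _ ≤ L * Mb + Mb := hmb A θ i
  have hbdd : ∀ (A : Finset (Fin N)) (s : Fin N → Bool),
      BddAbove (Set.range fun θ => ∑ i, eps (s i) * m A θ i) := by
    intro A s
    refine bdd_range _ ((N : ℝ) * (L * Mb + Mb)) fun θ => ?_
    calc ∑ i, eps (s i) * m A θ i ≤ ∑ _i : Fin N, (L * Mb + Mb) :=
          Finset.sum_le_sum fun i _ => hterm A s θ i
      _ = (N : ℝ) * (L * Mb + Mb) := by simp [Finset.card_univ]; ring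
  have main : ∀ A : Finset (Fin N),
      ∑ s : Fin N → Bool, (⨆ θ, ∑ i, eps (s i) * m ∅ θ i)
        ≤ ∑ s : Fin N → Bool, ⨆ θ, ∑ i, eps (s i) * m A θ i := by
    intro A
    induction A using Finset.induction_on with
    | empty => exact le_refl _
    | @insert j A hj IH =>
      refine le_trans IH ?_
      -- step: from A to insert j A
      set B' := insert j A with hB'
      set flip : (Fin N → Bool) → (Fin N → Bool) := fun s => Function.update s j (!(s j)) with hflip
      have flip_inv : ∀ s, flip (flip s) = s := by
        intro s; funext i
        by_cases hi : i = j
        · subst hi; simp [hflip]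
        · simp [hflip, Function.update_of_ne hi]
      have hsum_flip : ∀ F : (Fin N → Bool) → ℝ,
          ∑ s : Fin N → Bool, F (flip s) = ∑ s : Fin N → Bool, F s :=
        fun F => Fintype.sum_equiv ⟨flip, flip, flip_inv, flip_inv⟩ _ _ (fun s => rfl)
      -- per-s inequality
      have per_s : ∀ s : Fin N → Bool,
          (⨆ θ, ∑ i, eps (s i) * m A θ i) + (⨆ θ, ∑ i, eps (flip s i) * m A θ i)
            ≤ (⨆ θ, ∑ i, eps (s i) * m B' θ i) + (⨆ θ, ∑ i, eps (flip s i) * m B' θ i) := by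
        intro s
        set e := eps (s j) with he
        set Bf : Θ → ℝ := fun θ => ∑ i ∈ Finset.univ.erase j, eps (s i) * m B' θ i with hBf
        have hAB : ∀ θ, ∀ i ∈ Finset.univ.erase j, eps (s i) * m A θ i = eps (s i) * m B' θ i := by
          intro θ i hi
          have hij : i ≠ j := (Finset.mem_erase.mp hi).1
          have : (i ∈ A) = (i ∈ B') := by
            simp [hB', Finset.mem_insert, hij]
          simp only [hm, this]
        have hflip_eq : ∀ i, i ≠ j → eps (flip s i) = eps (s i) := by
          intro i hi; simp [hflip, Function.update_of_ne hi]
        have hflipj : eps (flip s j) = -e := by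
          simp [hflip, eps_not, he]
        -- rewrite the four sums
        have e1 : ∀ θ, ∑ i, eps (s i) * m A θ i = Bf θ + e * φ (g θ j) := by
          intro θ
          rw [← Finset.sum_erase_add Finset.univ _ (Finset.mem_univ j)]
          congr 1
          · exact Finset.sum_congr rfl (hAB θ)
          · simp [hm, hj, he]
        have e2 : ∀ θ, ∑ i, eps (flip s i) * m A θ i = Bf θ - e * φ (g θ j) := by
          intro θ
          rw [← Finset.sum_erase_add Finset.univ _ (Finset.mem_univ j)]
          rw [hflipj]
          have : ∑ i ∈ Finset.univ.erase j, eps (flip s i) * m A θ i = Bf θ := by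
            refine Finset.sum_congr rfl fun i hi => ?_
            have hij : i ≠ j := (Finset.mem_erase.mp hi).1
            rw [hflip_eq i hij, hAB θ i hi]
          rw [this]
          simp [hm, hj]
          ring
        have e3 : ∀ θ, ∑ i, eps (s i) * m B' θ i = Bf θ + e * (L * g θ j) := by
          intro θ
          rw [← Finset.sum_erase_add Finset.univ _ (Finset.mem_univ j)]
          congr 1
          simp [hm, hB', he]
        have e4 : ∀ θ, ∑ i, eps (flip s i) * m B' θ i = Bf θ - e * (L * g θ j) := by
          intro θ
          rw [← Finset.sum_erase_add Finset.univ _ (Finset.mem_univ j)]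
          rw [hflipj]
          have : ∑ i ∈ Finset.univ.erase j, eps (flip s i) * m B' θ i = Bf θ := by
            refine Finset.sum_congr rfl fun i hi => ?_
            rw [hflip_eq i (Finset.mem_erase.mp hi).1]
          rw [this]
          simp [hm, hB']
          ring
        simp only [e1, e2, e3, e4]
        -- apply pair_sup
        have hBfb : ∀ θ, Bf θ ≤ (N : ℝ) * (L * Mb + Mb) := by
          intro θ
          calc Bf θ ≤ ∑ i ∈ Finset.univ.erase j, (L * Mb + Mb) :=
                Finset.sum_le_sum fun i _ => hterm B' s θ i
            _ ≤ ∑ _i : Fin N, (L * Mb + Mb) := by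
                apply Finset.sum_le_sum_of_subset_of_nonneg (Finset.erase_subset _ _)
                intro i _ _
                nlinarith
            _ = (N : ℝ) * (L * Mb + Mb) := by simp [Finset.card_univ]; ring
        have hGb : ∀ θ, |e * g θ j| ≤ Mb := by
          intro θ; rw [abs_mul, he, eps_abs, one_mul]; exact hg θ j
        have hps1 : (⨆ θ, Bf θ + L * (e * g θ j)) = ⨆ θ, Bf θ + e * (L * g θ j) := by
          congr 1; funext θ; ring
        have hps2 : (⨆ θ, Bf θ - L * (e * g θ j)) = ⨆ θ, Bf θ - e * (L * g θ j) := by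
          congr 1; funext θ; ring
        rw [← hps1, ← hps2]
        refine pair_sup Bf (fun θ => e * g θ j) (fun θ => e * φ (g θ j)) L ?_ ?_ ?_
        · intro θ θ'
          have : e * φ (g θ j) - e * φ (g θ' j) = e * (φ (g θ j) - φ (g θ' j)) := by ring
          rw [this, abs_mul, he, eps_abs, one_mul]
          have : e * g θ j - e * g θ' j = e * (g θ j - g θ' j) := by ring
          rw [this, abs_mul, he, eps_abs, one_mul]
          exact hLip θ θ' j
        · refine bdd_range _ ((N : ℝ) * (L * Mb + Mb) + L * Mb) fun θ => ?_
          show Bf θ + L * (e * g θ j) ≤ (N : ℝ) * (L * Mb + Mb) + L * Mb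
          have h1 := hBfb θ
          have h2 : L * (e * g θ j) ≤ L * Mb := by
            calc L * (e * g θ j) ≤ |L * (e * g θ j)| := le_abs_self _
              _ = L * |e * g θ j| := by rw [abs_mul, abs_of_nonneg hL]
              _ ≤ L * Mb := mul_le_mul_of_nonneg_left (hGb θ) hL
          linarith
        · refine bdd_range _ ((N : ℝ) * (L * Mb + Mb) + L * Mb) fun θ => ?_
          show Bf θ - L * (e * g θ j) ≤ (N : ℝ) * (L * Mb + Mb) + L * Mb
          have h1 := hBfb θ
          have h2 : -(L * (e * g θ j)) ≤ L * Mb := by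
            have : -(L * (e * g θ j)) ≤ |L * (e * g θ j)| := neg_le_abs _
            calc -(L * (e * g θ j)) ≤ |L * (e * g θ j)| := neg_le_abs _
              _ = L * |e * g θ j| := by rw [abs_mul, abs_of_nonneg hL]
              _ ≤ L * Mb := mul_le_mul_of_nonneg_left (hGb θ) hL
          linarith
      -- sum the per-s inequalities
      have h2 : ∑ s : Fin N → Bool,
          ((⨆ θ, ∑ i, eps (s i) * m A θ i) + (⨆ θ, ∑ i, eps (flip s i) * m A θ i))
          ≤ ∑ s : Fin N → Bool,
          ((⨆ θ, ∑ i, eps (s i) * m B' θ i) + (⨆ θ, ∑ i, eps (flip s i) * m B' θ i)) :=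
        Finset.sum_le_sum fun s _ => per_s s
      rw [Finset.sum_add_distrib, Finset.sum_add_distrib] at h2
      rw [hsum_flip (fun s => ⨆ θ, ∑ i, eps (s i) * m A θ i)] at h2
      rw [hsum_flip (fun s => ⨆ θ, ∑ i, eps (s i) * m B' θ i)] at h2
      linarith
  have := main Finset.univ
  simpa [hm] using this




lemma pi_sign_eq (N : ℕ) :
    (Measure.pi fun _ : Fin N =>
      ((1 / 2 : ℝ≥0∞) • Measure.dirac (1 : ℝ) + (1 / 2 : ℝ≥0∞) • Measure.dirac (-1 : ℝ)))
    = ((2 : ℝ≥0∞) ^ N)⁻¹ • ∑ s : Fin N → Bool, Measure.dirac (fun i => eps (s i)) := by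
  haveI hprob : IsProbabilityMeasure
      ((1 / 2 : ℝ≥0∞) • Measure.dirac (1 : ℝ) + (1 / 2 : ℝ≥0∞) • Measure.dirac (-1 : ℝ)) := by
    constructor
    rw [Measure.add_apply, Measure.smul_apply, Measure.smul_apply]
    simp [ENNReal.inv_two_add_inv_two]
  classical
  refine Measure.pi_eq ?_
  intro A hA
  have hmeas : MeasurableSet (Set.univ.pi A) := MeasurableSet.univ_pi hA
  have hdirac : ∀ s : Fin N → Bool,
      (Measure.dirac (fun i => eps (s i)) : Measure (Fin N → ℝ)) (Set.univ.pi A)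
        = ∏ i, (if eps (s i) ∈ A i then (1:ℝ≥0∞) else 0) := by
    intro s
    rw [Measure.dirac_apply' _ hmeas]
    by_cases h : (fun i => eps (s i)) ∈ Set.univ.pi A
    · rw [Set.indicator_of_mem h]
      have hall : ∀ i, eps (s i) ∈ A i := fun i => h i (Set.mem_univ i)
      simp only [Pi.one_apply]
      rw [Finset.prod_congr rfl (fun i _ => if_pos (hall i))]
      simp
    · rw [Set.indicator_of_notMem h]
      rw [Set.mem_univ_pi] at h
      push_neg at h
      obtain ⟨i, hi⟩ := h
      exact (Finset.prod_eq_zero (Finset.mem_univ i) (by simp [hi])).symm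
  rw [Measure.smul_apply, Measure.finset_sum_apply]
  rw [Finset.sum_congr rfl (fun s _ => hdirac s)]
  rw [show (Finset.univ : Finset (Fin N → Bool))
      = Fintype.piFinset (fun _ : Fin N => (Finset.univ : Finset Bool)) from
    (Fintype.piFinset_univ).symm]
  rw [← Finset.prod_univ_sum (fun _ => (Finset.univ : Finset Bool))
    (fun i b => if eps b ∈ A i then (1:ℝ≥0∞) else 0)]
  have hone : ∀ i : Fin N,
      ((1 / 2 : ℝ≥0∞) • Measure.dirac (1 : ℝ) + (1 / 2 : ℝ≥0∞) • Measure.dirac (-1 : ℝ)) (A i)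
      = (1/2 : ℝ≥0∞) * ((if (1:ℝ) ∈ A i then (1:ℝ≥0∞) else 0) + (if (-1:ℝ) ∈ A i then (1:ℝ≥0∞) else 0)) := by
    intro i
    rw [Measure.add_apply, Measure.smul_apply, Measure.smul_apply,
      Measure.dirac_apply' _ (hA i), Measure.dirac_apply' _ (hA i)]
    simp [Set.indicator_apply, smul_eq_mul, mul_add]
  rw [Finset.prod_congr rfl (fun i _ => hone i)]
  rw [Finset.prod_mul_distrib]
  have hsb : ∀ i : Fin N, ∑ b : Bool, (if eps b ∈ A i then (1:ℝ≥0∞) else 0)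
      = (if (1:ℝ) ∈ A i then (1:ℝ≥0∞) else 0) + (if (-1:ℝ) ∈ A i then (1:ℝ≥0∞) else 0) := by
    intro i
    rw [Fintype.sum_bool]
    simp [eps]
  rw [smul_eq_mul, ← Finset.prod_congr rfl (fun i _ => (hsb i))]
  have h2 : ∏ _i : Fin N, (1/2 : ℝ≥0∞) = ((2:ℝ≥0∞)^N)⁻¹ := by
    rw [Finset.prod_const]
    simp [Finset.card_univ, ENNReal.inv_pow, one_div]
  rw [h2]

lemma integrable_dirac_of_sm {δ : Type*} [MeasurableSpace δ] [MeasurableSingletonClass δ]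
    {f : δ → ℝ} (hf : StronglyMeasurable f) (x : δ) :
    Integrable f (Measure.dirac x) := by
  refine ⟨hf.aestronglyMeasurable, ?_⟩
  rw [hasFiniteIntegral_iff_norm]
  rw [lintegral_dirac]
  exact ENNReal.ofReal_lt_top

lemma integral_pi_sign {N : ℕ} (f : (Fin N → ℝ) → ℝ) (hf : StronglyMeasurable f) :
    ∫ sg, f sg ∂(Measure.pi fun _ : Fin N =>
      ((1 / 2 : ℝ≥0∞) • Measure.dirac (1 : ℝ) + (1 / 2 : ℝ≥0∞) • Measure.dirac (-1 : ℝ)))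
    = ((2 : ℝ) ^ N)⁻¹ * ∑ s : Fin N → Bool, f (fun i => eps (s i)) := by
  rw [pi_sign_eq N, integral_smul_measure,
    integral_finset_sum_measure (fun s _ => integrable_dirac_of_sm hf _)]
  rw [Finset.sum_congr rfl (fun s _ => integral_dirac f _)]
  simp [ENNReal.toReal_inv, smul_eq_mul]



lemma log_lip {m x y : ℝ} (hm : 0 < m) (hx : m ≤ x) (hy : m ≤ y) :
    |Real.log x - Real.log y| ≤ m⁻¹ * |x - y| := by
  wlog h : y ≤ x generalizing x y
  · rw [abs_sub_comm, abs_sub_comm x y]; exact this hy hx (le_of_not_ge h)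
  have hx0 : 0 < x := lt_of_lt_of_le hm hx
  have hy0 : 0 < y := lt_of_lt_of_le hm hy
  rw [abs_of_nonneg (by rw [sub_nonneg]; exact Real.log_le_log hy0 h),
    abs_of_nonneg (by linarith)]
  rw [← Real.log_div (ne_of_gt hx0) (ne_of_gt hy0)]
  have h1 : Real.log (x / y) ≤ x / y - 1 := Real.log_le_sub_one_of_pos (by positivity)
  have h2 : x / y - 1 = (x - y) / y := by field_simp
  have h3 : (x - y) / y ≤ (x - y) / m := by
    apply div_le_div_of_nonneg_left (by linarith) hm hy
  calc Real.log (x / y) ≤ x / y - 1 := h1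
    _ = (x - y) / y := h2
    _ ≤ (x - y) / m := h3
    _ = m⁻¹ * (x - y) := by field_simp

lemma exp_lip {M x y : ℝ} (hx : x ≤ M) (hy : y ≤ M) :
    |Real.exp x - Real.exp y| ≤ Real.exp M * |x - y| := by
  wlog h : y ≤ x generalizing x y
  · rw [abs_sub_comm, abs_sub_comm x y]; exact this hy hx (le_of_not_ge h)
  rw [abs_of_nonneg (by rw [sub_nonneg]; exact Real.exp_le_exp.mpr h),
    abs_of_nonneg (by linarith)]
  have key : Real.exp x - Real.exp y ≤ Real.exp x * (x - y) := by
    have h1 : 1 - (x - y) ≤ Real.exp (y - x) := by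
      have := Real.add_one_le_exp (y - x); linarith
    have h2 : Real.exp y = Real.exp x * Real.exp (y - x) := by
      rw [← Real.exp_add]; ring_nf
    nlinarith [Real.exp_pos x]
  have hmono : Real.exp x ≤ Real.exp M := Real.exp_le_exp.mpr hx
  nlinarith [Real.exp_pos x]

lemma dot_self_nonneg {D : ℕ} (x : Fin D → ℝ) : 0 ≤ x ⬝ᵥ x :=
  Finset.sum_nonneg fun i _ => mul_self_nonneg _

lemma abs_dot_le {D : ℕ} (v x : Fin D → ℝ) :
    |v ⬝ᵥ x| ≤ Real.sqrt (v ⬝ᵥ v) * Real.sqrt (x ⬝ᵥ x) := by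
  have h := Finset.sum_mul_sq_le_sq_mul_sq Finset.univ v x
  have h1 : |v ⬝ᵥ x| = Real.sqrt ((v ⬝ᵥ x) ^ 2) := (Real.sqrt_sq_eq_abs _).symm
  rw [h1]
  have h2 : (v ⬝ᵥ x) ^ 2 ≤ (v ⬝ᵥ v) * (x ⬝ᵥ x) := by
    have hv : v ⬝ᵥ v = ∑ i, v i ^ 2 := by simp [dotProduct, sq]
    have hx : x ⬝ᵥ x = ∑ i, x i ^ 2 := by simp [dotProduct, sq]
    rw [hv, hx]; exact h
  calc Real.sqrt ((v ⬝ᵥ x) ^ 2) ≤ Real.sqrt ((v ⬝ᵥ v) * (x ⬝ᵥ x)) := Real.sqrt_le_sqrt h2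
    _ = Real.sqrt (v ⬝ᵥ v) * Real.sqrt (x ⬝ᵥ x) := Real.sqrt_mul (dot_self_nonneg v) _

lemma abs_comp_le {D : ℕ} (x : Fin D → ℝ) (j : Fin D) : |x j| ≤ Real.sqrt (x ⬝ᵥ x) := by
  have h1 : |x j| = Real.sqrt ((x j) ^ 2) := (Real.sqrt_sq_eq_abs _).symm
  rw [h1]
  apply Real.sqrt_le_sqrt
  have : x ⬝ᵥ x = ∑ i, x i ^ 2 := by simp [dotProduct, sq]
  rw [this]
  exact Finset.single_le_sum (f := fun i => x i ^ 2) (fun i _ => sq_nonneg _) (Finset.mem_univ j)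

lemma quad_lower {D : ℕ} {U : Matrix (Fin D) (Fin D) ℝ} {c : ℝ}
    (h : (U - c • (1 : Matrix (Fin D) (Fin D) ℝ)).PosSemidef) (x : Fin D → ℝ) :
    c * (x ⬝ᵥ x) ≤ x ⬝ᵥ (U *ᵥ x) := by
  have := h.dotProduct_mulVec_nonneg x
  simp only [star_trivial] at this
  rw [sub_mulVec, dotProduct_sub] at this
  have hc : x ⬝ᵥ ((c • (1 : Matrix (Fin D) (Fin D) ℝ)) *ᵥ x) = c * (x ⬝ᵥ x) := by
    rw [smul_mulVec, one_mulVec, dotProduct_smul, smul_eq_mul]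
  rw [hc] at this
  linarith

lemma quad_upper {D : ℕ} {U : Matrix (Fin D) (Fin D) ℝ} {c : ℝ}
    (h : (c • (1 : Matrix (Fin D) (Fin D) ℝ) - U).PosSemidef) (x : Fin D → ℝ) :
    x ⬝ᵥ (U *ᵥ x) ≤ c * (x ⬝ᵥ x) := by
  have := h.dotProduct_mulVec_nonneg x
  simp only [star_trivial] at this
  rw [sub_mulVec, dotProduct_sub] at this
  have hc : x ⬝ᵥ ((c • (1 : Matrix (Fin D) (Fin D) ℝ)) *ᵥ x) = c * (x ⬝ᵥ x) := by
    rw [smul_mulVec, one_mulVec, dotProduct_smul, smul_eq_mul]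
  rw [hc] at this
  linarith



lemma quad_single {D : ℕ} (U : Matrix (Fin D) (Fin D) ℝ) (j l : Fin D) (e : ℝ) :
    (Pi.single j (1:ℝ) + Pi.single l e) ⬝ᵥ (U *ᵥ (Pi.single j (1:ℝ) + Pi.single l e))
      = U j j + e * U j l + e * U l j + e * e * U l l := by
  rw [mulVec_add, mulVec_single, mulVec_single, dotProduct_add, add_dotProduct,
    add_dotProduct, single_dotProduct, single_dotProduct, single_dotProduct,
    single_dotProduct]
  simp only [Pi.smul_apply, Matrix.col_apply, op_smul_eq_mul]
  ring

lemma dot_single {D : ℕ} (j l : Fin D) (hjl : j ≠ l) (e : ℝ) :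
    (Pi.single j (1:ℝ) + Pi.single l e) ⬝ᵥ (Pi.single j (1:ℝ) + Pi.single l e)
      = 1 + e * e := by
  rw [dotProduct_add, add_dotProduct, add_dotProduct]
  rw [dotProduct_single, dotProduct_single]
  simp [Pi.single_apply, hjl, Ne.symm hjl]

lemma entry_bound {D : ℕ} {U : Matrix (Fin D) (Fin D) ℝ} {cLow cHigh : ℝ}
    (hsym : U.IsSymm) (h0 : 0 ≤ cLow)
    (hlow : (U - cLow • (1 : Matrix (Fin D) (Fin D) ℝ)).PosSemidef)
    (hhigh : (cHigh • (1 : Matrix (Fin D) (Fin D) ℝ) - U).PosSemidef)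
    (j l : Fin D) : |U j l| ≤ cHigh := by
  have hdiag : ∀ m : Fin D, cLow ≤ U m m ∧ U m m ≤ cHigh := by
    intro m
    have h1 := quad_lower hlow (Pi.single m (1:ℝ))
    have h2 := quad_upper hhigh (Pi.single m (1:ℝ))
    have hq : (Pi.single m (1:ℝ)) ⬝ᵥ (U *ᵥ Pi.single m (1:ℝ)) = U m m := by
      rw [mulVec_single, single_dotProduct]
      simp
    have hd : (Pi.single m (1:ℝ)) ⬝ᵥ (Pi.single m (1:ℝ)) = 1 := by
      rw [dotProduct_single]
      simp
    rw [hq, hd] at h1 h2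
    constructor <;> linarith
  by_cases hjl : j = l
  · subst hjl
    have := hdiag j
    rw [abs_le]
    constructor <;> linarith
  · have hsymm : U l j = U j l := by
      calc U l j = Uᵀ j l := (Matrix.transpose_apply U j l).symm
        _ = U j l := congrFun (congrFun hsym j) l
    have key : ∀ e : ℝ, e = 1 ∨ e = -1 →
        cLow * 2 ≤ U j j + 2 * (e * U j l) + U l l ∧
        U j j + 2 * (e * U j l) + U l l ≤ cHigh * 2 := by
      intro e he
      have h1 := quad_lower hlow (Pi.single j (1:ℝ) + Pi.single l e)
      have h2 := quad_upper hhigh (Pi.single j (1:ℝ) + Pi.single l e)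
      rw [quad_single, dot_single j l hjl] at h1 h2
      have hee : e * e = 1 := by rcases he with h | h <;> (subst h; norm_num)
      rw [hee] at h1 h2
      rw [hsymm] at h1 h2
      constructor <;> nlinarith
    have k1 := key 1 (Or.inl rfl)
    have k2 := key (-1) (Or.inr rfl)
    have hdj := hdiag j
    have hdl := hdiag l
    rw [abs_le]
    constructor <;> nlinarith

lemma heart {Θ : Type*} [Nonempty Θ] {D K N : ℕ} (hK : 1 ≤ K)
    (Uc : Θ → Fin K → Matrix (Fin D) (Fin D) ℝ) (vc : Θ → Fin K → Fin D → ℝ)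
    (wc : Θ → Fin K → ℝ) (Ef : Θ → Fin K → Fin N → ℝ)
    (uB vB wB P m₀ M₀ : ℝ) (hP : 0 ≤ P) (huB : 0 ≤ uB) (hvB : 0 ≤ vB) (hwB : 0 ≤ wB)
    (xs : Fin N → Fin D → ℝ) (hxs : ∀ i, Real.sqrt (xs i ⬝ᵥ xs i) ≤ P)
    (hEf : ∀ θ k i, Ef θ k i = xs i ⬝ᵥ (Uc θ k *ᵥ xs i) + vc θ k ⬝ᵥ xs i + wc θ k)
    (hentry : ∀ θ k j l, |Uc θ k j l| ≤ uB)
    (hvcomp : ∀ θ k j, |vc θ k j| ≤ vB)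
    (hwcomp : ∀ θ k, |wc θ k| ≤ wB)
    (hElow : ∀ θ k i, m₀ ≤ Ef θ k i)
    (hEhigh : ∀ θ k i, Ef θ k i ≤ M₀) :
    ∑ s : Fin N → Bool, ⨆ θ, ∑ i, eps (s i) * Real.log (∑ k, Real.exp (Ef θ k i))
      ≤ 2 ^ N * Real.sqrt N *
        (Real.exp (-m₀) * (K * (Real.exp M₀ * (uB * D ^ 2 * P ^ 2 + vB * (D * P) + wB)))) := by
  classical
  have hKpos : (0:ℝ) < K := by exact_mod_cast Nat.lt_of_lt_of_le Nat.zero_lt_one hK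
  set L₁ := Real.exp (-m₀) with hL₁
  set L₂ := Real.exp M₀ with hL₂
  have hL₁0 : 0 ≤ L₁ := (Real.exp_pos _).le
  have hL₂0 : 0 ≤ L₂ := (Real.exp_pos _).le
  set Sg : Θ → Fin N → ℝ := fun θ i => ∑ k, Real.exp (Ef θ k i) with hSg
  -- bounds on Sg
  have hSlo : ∀ θ i, Real.exp m₀ ≤ Sg θ i := by
    intro θ i
    calc Real.exp m₀ ≤ Real.exp (Ef θ ⟨0, hK⟩ i) := Real.exp_le_exp.mpr (hElow θ _ i)
      _ ≤ Sg θ i := Finset.single_le_sum (f := fun k => Real.exp (Ef θ k i))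
          (fun k _ => (Real.exp_pos _).le) (Finset.mem_univ _)
  have hShi : ∀ θ i, Sg θ i ≤ K * Real.exp M₀ := by
    intro θ i
    calc Sg θ i ≤ ∑ _k : Fin K, Real.exp M₀ :=
          Finset.sum_le_sum fun k _ => Real.exp_le_exp.mpr (hEhigh θ k i)
      _ = K * Real.exp M₀ := by simp [Finset.card_univ]
  have hSpos : ∀ θ i, 0 < Sg θ i := fun θ i => lt_of_lt_of_le (Real.exp_pos _) (hSlo θ i)
  -- bounds on log Sg
  have hloglo : ∀ θ i, m₀ ≤ Real.log (Sg θ i) := by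
    intro θ i
    calc m₀ = Real.log (Real.exp m₀) := (Real.log_exp _).symm
      _ ≤ Real.log (Sg θ i) := Real.log_le_log (Real.exp_pos _) (hSlo θ i)
  have hloghi : ∀ θ i, Real.log (Sg θ i) ≤ Real.log K + M₀ := by
    intro θ i
    calc Real.log (Sg θ i) ≤ Real.log (K * Real.exp M₀) :=
          Real.log_le_log (hSpos θ i) (hShi θ i)
      _ = Real.log K + M₀ := by rw [Real.log_mul (ne_of_gt hKpos) (ne_of_gt (Real.exp_pos _)), Real.log_exp]
  -- Mb bounds
  set Mb₁ : ℝ := K * Real.exp M₀ + (|m₀| + |Real.log K + M₀|) with hMb₁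
  have hMb₁0 : 0 ≤ Mb₁ := by positivity
  have habs_int : ∀ x lo hi : ℝ, lo ≤ x → x ≤ hi → |x| ≤ |lo| + |hi| := by
    intro x lo hi h1 h2
    rw [abs_le]
    constructor
    · have := neg_abs_le lo; have := abs_nonneg hi; linarith
    · have := le_abs_self hi; have := abs_nonneg lo; linarith
  have hgb₁ : ∀ θ i, |Sg θ i| ≤ Mb₁ := by
    intro θ i
    rw [abs_of_pos (hSpos θ i)]
    have h := hShi θ i
    have h1 : (0:ℝ) ≤ |m₀| + |Real.log ↑K + M₀| := by positivity
    linarith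
  have hφb₁ : ∀ θ i, |Real.log (Sg θ i)| ≤ Mb₁ := by
    intro θ i
    have := habs_int _ _ _ (hloglo θ i) (hloghi θ i)
    have h2 : |Real.log (Sg θ i)| ≤ |m₀| + |Real.log ↑K + M₀| := this
    have h3 : (0:ℝ) ≤ K * Real.exp M₀ := by positivity
    linarith
  -- contraction 1
  have hlip₁ : ∀ θ θ' i, |Real.log (Sg θ i) - Real.log (Sg θ' i)| ≤ L₁ * |Sg θ i - Sg θ' i| := by
    intro θ θ' i
    have h2 := log_lip (Real.exp_pos m₀) (hSlo θ i) (hSlo θ' i)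
    calc |Real.log (Sg θ i) - Real.log (Sg θ' i)|
        ≤ (Real.exp m₀)⁻¹ * |Sg θ i - Sg θ' i| := h2
      _ = L₁ * |Sg θ i - Sg θ' i| := by rw [hL₁, Real.exp_neg]
  have step1 := contraction Sg Real.log L₁ Mb₁ hL₁0 hMb₁0 hgb₁ hφb₁ hlip₁
  -- bddAbove helpers for exp sums
  have hexpb : ∀ (k : Fin K) (θ : Θ) (i : Fin N), Real.exp (Ef θ k i) ≤ L₂ :=
    fun k θ i => Real.exp_le_exp.mpr (hEhigh θ k i)
  have bddk : ∀ (s : Fin N → Bool) (k : Fin K),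
      BddAbove (Set.range fun θ => ∑ i, eps (s i) * Real.exp (Ef θ k i)) := by
    intro s k
    refine bdd_range _ ((N:ℝ) * L₂) fun θ => ?_
    calc ∑ i, eps (s i) * Real.exp (Ef θ k i) ≤ ∑ _i : Fin N, L₂ := by
          refine Finset.sum_le_sum fun i _ => ?_
          calc eps (s i) * Real.exp (Ef θ k i) ≤ |eps (s i) * Real.exp (Ef θ k i)| := le_abs_self _
            _ = Real.exp (Ef θ k i) := by
                rw [abs_mul, eps_abs, one_mul, abs_of_pos (Real.exp_pos _)]
            _ ≤ L₂ := hexpb k θ i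
      _ = (N:ℝ) * L₂ := by simp [Finset.card_univ]
  -- step 2 : per-s
  have step2 : ∀ s : Fin N → Bool, (⨆ θ, ∑ i, eps (s i) * (L₁ * Sg θ i))
      ≤ L₁ * ∑ k, ⨆ θ, ∑ i, eps (s i) * Real.exp (Ef θ k i) := by
    intro s
    refine ciSup_le fun θ => ?_
    have h1 : ∑ i, eps (s i) * (L₁ * Sg θ i)
        = L₁ * ∑ k, ∑ i, eps (s i) * Real.exp (Ef θ k i) := by
      have hswap : ∀ i, eps (s i) * (L₁ * Sg θ i)
          = ∑ k, L₁ * (eps (s i) * Real.exp (Ef θ k i)) := by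
        intro i
        rw [show Sg θ i = ∑ k, Real.exp (Ef θ k i) from rfl, Finset.mul_sum, Finset.mul_sum]
        exact Finset.sum_congr rfl fun k _ => by ring
      rw [Finset.sum_congr rfl fun i _ => hswap i, Finset.sum_comm, Finset.mul_sum]
      exact Finset.sum_congr rfl fun k _ => (Finset.mul_sum _ _ _).symm
    rw [h1]
    refine mul_le_mul_of_nonneg_left ?_ hL₁0
    exact Finset.sum_le_sum fun k _ => le_ciSup (bddk s k) θ
  -- contraction 2 per k
  set MbE : ℝ := L₂ + (|m₀| + |M₀|) with hMbE
  have hMbE0 : 0 ≤ MbE := by positivity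
  have step3 : ∀ k : Fin K,
      ∑ s : Fin N → Bool, (⨆ θ, ∑ i, eps (s i) * Real.exp (Ef θ k i))
        ≤ ∑ s : Fin N → Bool, ⨆ θ, ∑ i, eps (s i) * (L₂ * Ef θ k i) := by
    intro k
    refine contraction (fun θ i => Ef θ k i) Real.exp L₂ MbE hL₂0 hMbE0 ?_ ?_ ?_
    · intro θ i
      have := habs_int _ _ _ (hElow θ k i) (hEhigh θ k i)
      have h3 : (0:ℝ) ≤ L₂ := hL₂0
      simp only [hMbE]
      linarith
    · intro θ i
      rw [abs_of_pos (Real.exp_pos _)]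
      have := hexpb k θ i
      have h4 : (0:ℝ) ≤ |m₀| + |M₀| := by positivity
      simp only [hMbE]
      linarith
    · intro θ θ' i
      exact exp_lip (hEhigh θ k i) (hEhigh θ' k i)
  -- step 4 : per-(k,s) linear bound
  set Bnd : (Fin N → Bool) → ℝ := fun s =>
    uB * ∑ j, ∑ l, |∑ i, eps (s i) * (xs i j * xs i l)|
      + vB * ∑ j, |∑ i, eps (s i) * xs i j|
      + wB * |∑ i, eps (s i) * 1| with hBnd
  have step4 : ∀ (k : Fin K) (s : Fin N → Bool),
      (⨆ θ, ∑ i, eps (s i) * (L₂ * Ef θ k i)) ≤ L₂ * Bnd s := by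
    intro k s
    refine ciSup_le fun θ => ?_
    have hsplit : ∑ i, eps (s i) * (L₂ * Ef θ k i) = L₂ * ∑ i, eps (s i) * Ef θ k i := by
      rw [Finset.mul_sum]; exact Finset.sum_congr rfl fun i _ => by ring
    rw [hsplit]
    refine mul_le_mul_of_nonneg_left ?_ hL₂0
    -- main linear bound : ∑ i, eps (s i) * Ef θ k i ≤ Bnd s
    have hquad : ∀ i, xs i ⬝ᵥ (Uc θ k *ᵥ xs i) = ∑ j, ∑ l, Uc θ k j l * (xs i j * xs i l) := by
      intro i
      simp only [dotProduct, Matrix.mulVec, Finset.mul_sum]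
      exact Finset.sum_congr rfl fun j _ => Finset.sum_congr rfl fun l _ => by ring
    have hvdot : ∀ i, vc θ k ⬝ᵥ xs i = ∑ j, vc θ k j * xs i j := by
      intro i; simp [dotProduct]
    have hdecomp : ∑ i, eps (s i) * Ef θ k i
        = (∑ j, ∑ l, Uc θ k j l * ∑ i, eps (s i) * (xs i j * xs i l))
          + (∑ j, vc θ k j * ∑ i, eps (s i) * xs i j)
          + wc θ k * ∑ i, eps (s i) * 1 := by
      have h1 : ∀ i, eps (s i) * Ef θ k i
          = (∑ j, ∑ l, Uc θ k j l * (eps (s i) * (xs i j * xs i l)))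
            + (∑ j, vc θ k j * (eps (s i) * xs i j))
            + wc θ k * (eps (s i) * 1) := by
        intro i
        rw [hEf θ k i, hquad i, hvdot i]
        rw [mul_add, mul_add]
        congr 1
        · congr 1
          · rw [Finset.mul_sum]
            refine Finset.sum_congr rfl fun j _ => ?_
            rw [Finset.mul_sum]
            exact Finset.sum_congr rfl fun l _ => by ring
          · rw [Finset.mul_sum]
            exact Finset.sum_congr rfl fun j _ => by ring
        · ring
      rw [Finset.sum_congr rfl fun i _ => h1 i]
      rw [Finset.sum_add_distrib, Finset.sum_add_distrib]
      congr 1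
      · congr 1
        · rw [Finset.sum_comm]
          refine Finset.sum_congr rfl fun j _ => ?_
          rw [Finset.sum_comm]
          refine Finset.sum_congr rfl fun l _ => ?_
          rw [Finset.mul_sum]
        · rw [Finset.sum_comm]
          refine Finset.sum_congr rfl fun j _ => ?_
          rw [Finset.mul_sum]
      · rw [Finset.mul_sum]
    rw [hdecomp, hBnd]
    simp only []
    have hT1 : ∑ j, ∑ l, Uc θ k j l * ∑ i, eps (s i) * (xs i j * xs i l)
        ≤ uB * ∑ j, ∑ l, |∑ i, eps (s i) * (xs i j * xs i l)| := by
      rw [Finset.mul_sum]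
      refine Finset.sum_le_sum fun j _ => ?_
      rw [Finset.mul_sum]
      refine Finset.sum_le_sum fun l _ => ?_
      calc Uc θ k j l * ∑ i, eps (s i) * (xs i j * xs i l)
          ≤ |Uc θ k j l * ∑ i, eps (s i) * (xs i j * xs i l)| := le_abs_self _
        _ = |Uc θ k j l| * |∑ i, eps (s i) * (xs i j * xs i l)| := abs_mul _ _
        _ ≤ uB * |∑ i, eps (s i) * (xs i j * xs i l)| :=
            mul_le_mul_of_nonneg_right (hentry θ k j l) (abs_nonneg _)
    have hT2 : ∑ j, vc θ k j * ∑ i, eps (s i) * xs i j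
        ≤ vB * ∑ j, |∑ i, eps (s i) * xs i j| := by
      rw [Finset.mul_sum]
      refine Finset.sum_le_sum fun j _ => ?_
      calc vc θ k j * ∑ i, eps (s i) * xs i j
          ≤ |vc θ k j * ∑ i, eps (s i) * xs i j| := le_abs_self _
        _ = |vc θ k j| * |∑ i, eps (s i) * xs i j| := abs_mul _ _
        _ ≤ vB * |∑ i, eps (s i) * xs i j| :=
            mul_le_mul_of_nonneg_right (hvcomp θ k j) (abs_nonneg _)
    have hT3 : wc θ k * ∑ i, eps (s i) * 1 ≤ wB * |∑ i, eps (s i) * 1| := by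
      calc wc θ k * ∑ i, eps (s i) * 1 ≤ |wc θ k * ∑ i, eps (s i) * 1| := le_abs_self _
        _ = |wc θ k| * |∑ i, eps (s i) * 1| := abs_mul _ _
        _ ≤ wB * |∑ i, eps (s i) * 1| :=
            mul_le_mul_of_nonneg_right (hwcomp θ k) (abs_nonneg _)
    linarith
  -- step 5 : sum of Bnd over signs
  have hxP : ∀ i, xs i ⬝ᵥ xs i ≤ P ^ 2 := by
    intro i
    have h := hxs i
    have h2 : xs i ⬝ᵥ xs i = Real.sqrt (xs i ⬝ᵥ xs i) ^ 2 :=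
      (Real.sq_sqrt (dot_self_nonneg (xs i))).symm
    rw [h2]
    exact pow_le_pow_left₀ (Real.sqrt_nonneg _) h 2
  have hcomp : ∀ i j, |xs i j| ≤ P := fun i j => le_trans (abs_comp_le (xs i) j) (hxs i)
  have step5 : ∑ s : Fin N → Bool, Bnd s
      ≤ 2 ^ N * (Real.sqrt N * (uB * D ^ 2 * P ^ 2 + vB * (D * P) + wB)) := by
    have k1 : ∀ j l : Fin D, ∑ s : Fin N → Bool, |∑ i, eps (s i) * (xs i j * xs i l)|
        ≤ 2 ^ N * (Real.sqrt N * (P * P)) := by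
      intro j l
      refine khintchine _ (P * P) (mul_nonneg hP hP) fun i => ?_
      rw [abs_mul]
      exact mul_le_mul (hcomp i j) (hcomp i l) (abs_nonneg _) hP
    have k2 : ∀ j : Fin D, ∑ s : Fin N → Bool, |∑ i, eps (s i) * xs i j|
        ≤ 2 ^ N * (Real.sqrt N * P) := by
      intro j
      exact khintchine _ P hP fun i => hcomp i j
    have k3 : ∑ s : Fin N → Bool, |∑ i, eps (s i) * 1| ≤ 2 ^ N * (Real.sqrt N * 1) := by
      refine khintchine _ 1 zero_le_one fun i => by simp
    have hsum : ∑ s : Fin N → Bool, Bnd s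
        = uB * ∑ j, ∑ l, ∑ s : Fin N → Bool, |∑ i, eps (s i) * (xs i j * xs i l)|
          + vB * ∑ j, ∑ s : Fin N → Bool, |∑ i, eps (s i) * xs i j|
          + wB * ∑ s : Fin N → Bool, |∑ i, eps (s i) * 1| := by
      rw [hBnd]
      rw [Finset.sum_add_distrib, Finset.sum_add_distrib]
      congr 1
      · congr 1
        · rw [← Finset.mul_sum]
          congr 1
          rw [Finset.sum_comm]
          refine Finset.sum_congr rfl fun j _ => ?_
          rw [Finset.sum_comm]
        · rw [← Finset.mul_sum]
          congr 1
          rw [Finset.sum_comm]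
      · rw [← Finset.mul_sum]
    rw [hsum]
    have b1 : ∑ j : Fin D, ∑ l : Fin D, ∑ s : Fin N → Bool, |∑ i, eps (s i) * (xs i j * xs i l)|
        ≤ (D:ℝ)^2 * (2 ^ N * (Real.sqrt N * (P * P))) := by
      calc ∑ j : Fin D, ∑ l : Fin D, ∑ s : Fin N → Bool, |∑ i, eps (s i) * (xs i j * xs i l)|
          ≤ ∑ _j : Fin D, ∑ _l : Fin D, 2 ^ N * (Real.sqrt N * (P * P)) :=
            Finset.sum_le_sum fun j _ => Finset.sum_le_sum fun l _ => k1 j l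
        _ = (D:ℝ)^2 * (2 ^ N * (Real.sqrt N * (P * P))) := by
            simp [Finset.card_univ]; ring
    have b2 : ∑ j : Fin D, ∑ s : Fin N → Bool, |∑ i, eps (s i) * xs i j|
        ≤ (D:ℝ) * (2 ^ N * (Real.sqrt N * P)) := by
      calc ∑ j : Fin D, ∑ s : Fin N → Bool, |∑ i, eps (s i) * xs i j|
          ≤ ∑ _j : Fin D, 2 ^ N * (Real.sqrt N * P) := Finset.sum_le_sum fun j _ => k2 j
        _ = (D:ℝ) * (2 ^ N * (Real.sqrt N * P)) := by simp [Finset.card_univ]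
    have hfinal : uB * ((D:ℝ)^2 * (2 ^ N * (Real.sqrt N * (P * P))))
        + vB * ((D:ℝ) * (2 ^ N * (Real.sqrt N * P)))
        + wB * (2 ^ N * (Real.sqrt N * 1))
        = 2 ^ N * (Real.sqrt N * (uB * D ^ 2 * P ^ 2 + vB * (D * P) + wB)) := by ring
    have m1 := mul_le_mul_of_nonneg_left b1 huB
    have m2 := mul_le_mul_of_nonneg_left b2 hvB
    have m3 := mul_le_mul_of_nonneg_left k3 hwB
    linarith
  -- assemble
  calc ∑ s : Fin N → Bool, ⨆ θ, ∑ i, eps (s i) * Real.log (∑ k, Real.exp (Ef θ k i))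
      ≤ ∑ s : Fin N → Bool, ⨆ θ, ∑ i, eps (s i) * (L₁ * Sg θ i) := step1
    _ ≤ ∑ s : Fin N → Bool, L₁ * ∑ k, ⨆ θ, ∑ i, eps (s i) * Real.exp (Ef θ k i) :=
        Finset.sum_le_sum fun s _ => step2 s
    _ = L₁ * ∑ k, ∑ s : Fin N → Bool, ⨆ θ, ∑ i, eps (s i) * Real.exp (Ef θ k i) := by
        rw [← Finset.mul_sum, Finset.sum_comm]
    _ ≤ L₁ * ∑ k, ∑ s : Fin N → Bool, ⨆ θ, ∑ i, eps (s i) * (L₂ * Ef θ k i) := by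
        refine mul_le_mul_of_nonneg_left (Finset.sum_le_sum fun k _ => step3 k) hL₁0
    _ ≤ L₁ * ∑ k : Fin K, ∑ s : Fin N → Bool, L₂ * Bnd s := by
        refine mul_le_mul_of_nonneg_left ?_ hL₁0
        exact Finset.sum_le_sum fun k _ => Finset.sum_le_sum fun s _ => step4 k s
    _ = L₁ * (K * (L₂ * ∑ s : Fin N → Bool, Bnd s)) := by
        have hin : (∑ s : Fin N → Bool, L₂ * Bnd s) = L₂ * ∑ s : Fin N → Bool, Bnd s :=
          (Finset.mul_sum _ _ _).symm
        rw [hin, Finset.sum_const, Finset.card_univ, Fintype.card_fin, nsmul_eq_mul]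
    _ ≤ L₁ * (K * (L₂ * (2 ^ N * (Real.sqrt N * (uB * D ^ 2 * P ^ 2 + vB * (D * P) + wB))))) := by
        refine mul_le_mul_of_nonneg_left ?_ hL₁0
        refine mul_le_mul_of_nonneg_left ?_ hKpos.le
        exact mul_le_mul_of_nonneg_left step5 hL₂0
    _ = 2 ^ N * Real.sqrt N *
        (L₁ * (K * (L₂ * (uB * D ^ 2 * P ^ 2 + vB * (D * P) + wB)))) := by ring

lemma abs_le_interval {x lo hi : ℝ} (h1 : lo ≤ x) (h2 : x ≤ hi) : |x| ≤ |lo| + |hi| := by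
  rw [abs_le]
  constructor
  · have := neg_abs_le lo; have := abs_nonneg hi; linarith
  · have := le_abs_self hi; have := abs_nonneg lo; linarith

lemma isSymm_smul_one {D : ℕ} (c : ℝ) : (c • (1 : Matrix (Fin D) (Fin D) ℝ)).IsSymm := by
  unfold Matrix.IsSymm
  rw [Matrix.transpose_smul, Matrix.transpose_one]

lemma psd_smul_one {D : ℕ} {c : ℝ} (hc : 0 ≤ c) :
    ((c • (1 : Matrix (Fin D) (Fin D) ℝ))).PosSemidef := by
  refine posSemidef_iff_dotProduct_mulVec.mpr ⟨?_, ?_⟩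
  · show (c • (1 : Matrix (Fin D) (Fin D) ℝ))ᴴ = _
    rw [Matrix.conjTranspose_smul, Matrix.conjTranspose_one]
    simp
  · intro x
    simp only [star_trivial]
    rw [Matrix.smul_mulVec, Matrix.one_mulVec, dotProduct_smul, smul_eq_mul]
    exact mul_nonneg hc (dot_self_nonneg x)

lemma psd_zero' {D : ℕ} : ((0 : Matrix (Fin D) (Fin D) ℝ)).PosSemidef := by
  have := psd_smul_one (D := D) (c := (0:ℝ)) le_rfl
  simpa using this

def PFull (D K : ℕ) (uLow uHigh V wLow wHigh a A : ℝ) : Type :=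
  {q : (Fin K → ℝ) × (Fin K → Matrix (Fin D) (Fin D) ℝ) × (Fin K → (Fin D → ℝ)) × (Fin K → ℝ) //
    (∀ k, (q.2.1 k).IsSymm) ∧
    (∀ k, (q.2.1 k - uLow • (1 : Matrix (Fin D) (Fin D) ℝ)).PosSemidef) ∧
    (∀ k, (uHigh • (1 : Matrix (Fin D) (Fin D) ℝ) - q.2.1 k).PosSemidef) ∧
    (∀ k, Real.sqrt ((q.2.2.1 k) ⬝ᵥ (q.2.2.1 k)) ≤ V) ∧
    (∀ k, wLow ≤ q.2.2.2 k ∧ q.2.2.2 k ≤ wHigh) ∧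
    (∀ k, a ≤ q.1 k ∧ q.1 k ≤ A)}

def PRed (D K : ℕ) (uLow uHigh V wlo whi : ℝ) : Type :=
  {q : (Fin K → Matrix (Fin D) (Fin D) ℝ) × (Fin K → (Fin D → ℝ)) × (Fin K → ℝ) //
    (∀ k, (q.1 k).IsSymm) ∧
    (∀ k, (q.1 k - uLow • (1 : Matrix (Fin D) (Fin D) ℝ)).PosSemidef) ∧
    (∀ k, (uHigh • (1 : Matrix (Fin D) (Fin D) ℝ) - q.1 k).PosSemidef) ∧
    (∀ k, Real.sqrt ((q.2.1 k) ⬝ᵥ (q.2.1 k)) ≤ V) ∧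
    (∀ k, wlo ≤ q.2.2 k ∧ q.2.2 k ≤ whi)}

lemma nonempty_PRed {D K : ℕ} {uLow uHigh V wlo whi : ℝ} (hu : uLow ≤ uHigh)
    (hV : 0 ≤ V) (hwb : wlo ≤ whi) :
    Nonempty (PRed D K uLow uHigh V wlo whi) := by
  refine ⟨⟨(fun _ => uLow • 1, fun _ => 0, fun _ => wlo), ?_, ?_, ?_, ?_, ?_⟩⟩
  · exact fun k => isSymm_smul_one uLow
  · intro k; rw [sub_self]; exact psd_zero'
  · intro k
    have h : uHigh • (1 : Matrix (Fin D) (Fin D) ℝ) - uLow • 1 = (uHigh - uLow) • 1 := by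
      rw [sub_smul]
    rw [h]; exact psd_smul_one (by linarith)
  · intro k; simpa using hV
  · exact fun k => ⟨le_rfl, hwb⟩

lemma nonempty_PFull {D K : ℕ} {uLow uHigh V wLow wHigh a A : ℝ} (hu : uLow ≤ uHigh)
    (hV : 0 ≤ V) (hwb : wLow ≤ wHigh) (haA : a ≤ A) :
    Nonempty (PFull D K uLow uHigh V wLow wHigh a A) := by
  refine ⟨⟨(fun _ => a, fun _ => uLow • 1, fun _ => 0, fun _ => wLow), ?_, ?_, ?_, ?_, ?_, ?_⟩⟩
  · exact fun k => isSymm_smul_one uLow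
  · intro k; rw [sub_self]; exact psd_zero'
  · intro k
    have h : uHigh • (1 : Matrix (Fin D) (Fin D) ℝ) - uLow • 1 = (uHigh - uLow) • 1 := by
      rw [sub_smul]
    rw [h]; exact psd_smul_one (by linarith)
  · intro k; simpa using hV
  · exact fun k => ⟨le_rfl, hwb⟩
  · exact fun k => ⟨le_rfl, haA⟩

lemma Ebounds {D : ℕ} {uLow uHigh V : ℝ} (huLow : 0 ≤ uLow) (hV : 0 ≤ V)
    {U : Matrix (Fin D) (Fin D) ℝ}
    (hpsdl : (U - uLow • (1 : Matrix (Fin D) (Fin D) ℝ)).PosSemidef)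
    (hpsdh : (uHigh • (1 : Matrix (Fin D) (Fin D) ℝ) - U).PosSemidef)
    {v : Fin D → ℝ} (hv : Real.sqrt (v ⬝ᵥ v) ≤ V) (x : Fin D → ℝ) :
    -(V * Real.sqrt (x ⬝ᵥ x)) ≤ x ⬝ᵥ (U *ᵥ x) + v ⬝ᵥ x ∧
      x ⬝ᵥ (U *ᵥ x) + v ⬝ᵥ x
        ≤ uHigh * (Real.sqrt (x ⬝ᵥ x))^2 + V * Real.sqrt (x ⬝ᵥ x) := by
  have hr : Real.sqrt (x ⬝ᵥ x) ^ 2 = x ⬝ᵥ x := Real.sq_sqrt (dot_self_nonneg x)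
  have hql := quad_lower hpsdl x
  have hqh := quad_upper hpsdh x
  have hd : |v ⬝ᵥ x| ≤ V * Real.sqrt (x ⬝ᵥ x) := by
    calc |v ⬝ᵥ x| ≤ Real.sqrt (v ⬝ᵥ v) * Real.sqrt (x ⬝ᵥ x) := abs_dot_le v x
      _ ≤ V * Real.sqrt (x ⬝ᵥ x) := mul_le_mul_of_nonneg_right hv (Real.sqrt_nonneg _)
  have hd1 := neg_abs_le (v ⬝ᵥ x)
  have hd2 := le_abs_self (v ⬝ᵥ x)
  have hq0 : 0 ≤ x ⬝ᵥ (U *ᵥ x) := le_trans (mul_nonneg huLow (dot_self_nonneg x)) hql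
  constructor
  · linarith
  · rw [hr]; linarith

lemma logsum_bounds {K : ℕ} (hK : 1 ≤ K) {a A : ℝ} (ha : 0 < a) (haA : a ≤ A)
    (α : Fin K → ℝ) (hα : ∀ k, a ≤ α k ∧ α k ≤ A) (E : Fin K → ℝ) (lo hi : ℝ)
    (hE : ∀ k, lo ≤ E k ∧ E k ≤ hi) :
    Real.log a + lo ≤ Real.log (∑ k, α k * Real.exp (E k)) ∧
      Real.log (∑ k, α k * Real.exp (E k)) ≤ Real.log ((K:ℝ) * A) + hi := by
  have hKpos : (0:ℝ) < K := by exact_mod_cast Nat.lt_of_lt_of_le Nat.zero_lt_one hK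
  have hA : 0 < A := lt_of_lt_of_le ha haA
  have hterm_pos : ∀ k, 0 < α k * Real.exp (E k) :=
    fun k => mul_pos (lt_of_lt_of_le ha (hα k).1) (Real.exp_pos _)
  have hSlo : a * Real.exp lo ≤ ∑ k, α k * Real.exp (E k) := by
    calc a * Real.exp lo ≤ α ⟨0, hK⟩ * Real.exp (E ⟨0, hK⟩) := by
          exact mul_le_mul (hα _).1 (Real.exp_le_exp.mpr (hE _).1) (Real.exp_pos _).le
            (le_trans ha.le (hα _).1)
      _ ≤ ∑ k, α k * Real.exp (E k) :=
          Finset.single_le_sum (f := fun k => α k * Real.exp (E k))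
            (fun k _ => (hterm_pos k).le) (Finset.mem_univ _)
  have hShi : ∑ k, α k * Real.exp (E k) ≤ (K:ℝ) * A * Real.exp hi := by
    calc ∑ k, α k * Real.exp (E k) ≤ ∑ _k : Fin K, A * Real.exp hi := by
          refine Finset.sum_le_sum fun k _ => ?_
          exact mul_le_mul (hα k).2 (Real.exp_le_exp.mpr (hE k).2) (Real.exp_pos _).le hA.le
      _ = (K:ℝ) * A * Real.exp hi := by simp [Finset.card_univ]; ring
  have hSpos : 0 < ∑ k, α k * Real.exp (E k) :=
    lt_of_lt_of_le (mul_pos ha (Real.exp_pos lo)) hSlo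
  constructor
  · calc Real.log a + lo = Real.log (a * Real.exp lo) := by
          rw [Real.log_mul (ne_of_gt ha) (ne_of_gt (Real.exp_pos _)), Real.log_exp]
      _ ≤ Real.log (∑ k, α k * Real.exp (E k)) :=
          Real.log_le_log (mul_pos ha (Real.exp_pos lo)) hSlo
  · calc Real.log (∑ k, α k * Real.exp (E k))
        ≤ Real.log ((K:ℝ) * A * Real.exp hi) := Real.log_le_log hSpos hShi
      _ = Real.log ((K:ℝ) * A) + hi := by
          rw [Real.log_mul (ne_of_gt (mul_pos hKpos hA)) (ne_of_gt (Real.exp_pos _)),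
            Real.log_exp]

end RadHelper

open RadHelper

/-- the Rademacher complexity of the class of constrained log-sum-exp
quadratic functions, with respect to a probability distribution supported in the closed
ball of radius `P`, is bounded by `C/√N` with `C` independent of `N`. The Rademacher
complexity `E[sup_f (1/N) Σ σ_i f(x_i)]` is written out as an iterated integral over
the i.i.d. samples and the i.i.d. Rademacher signs. -/
theorem rademacher_complexity_logsumexp_quadratic
    (D K : ℕ) (hD : 1 ≤ D) (hK : 1 ≤ K)
    (uLow uHigh V wLow wHigh a A P : ℝ)
    (huLow : 0 < uLow) (hu : uLow ≤ uHigh) (hV : 0 < V)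
    (hw : wLow ≤ wHigh) (ha : 0 < a) (haA : a ≤ A) (hP : 0 < P)
    (p : Measure (Fin D → ℝ)) (hp : IsProbabilityMeasure p)
    -- the support of p is contained in the closed ball of radius P centered at 0
    (hsupp : ∀ᵐ x ∂p, Real.sqrt (x ⬝ᵥ x) ≤ P) :
    ∃ C : ℝ, ∀ N : ℕ, 1 ≤ N →
      (∫ xs : Fin N → (Fin D → ℝ),
        (∫ sg : Fin N → ℝ,
          sSup {t : ℝ | ∃ (α : Fin K → ℝ) (Umat : Fin K → Matrix (Fin D) (Fin D) ℝ)
              (v : Fin K → (Fin D → ℝ)) (w : Fin K → ℝ),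
              (∀ k, (Umat k).IsSymm) ∧
              (∀ k, (Umat k - uLow • (1 : Matrix (Fin D) (Fin D) ℝ)).PosSemidef) ∧
              (∀ k, (uHigh • (1 : Matrix (Fin D) (Fin D) ℝ) - Umat k).PosSemidef) ∧
              (∀ k, Real.sqrt ((v k) ⬝ᵥ (v k)) ≤ V) ∧
              (∀ k, wLow ≤ w k ∧ w k ≤ wHigh) ∧
              (∀ k, a ≤ α k ∧ α k ≤ A) ∧
              t = (1 / (N : ℝ)) * ∑ i, sg i *
                    Real.log (∑ k, α k *
                      Real.exp (((xs i) ⬝ᵥ (Umat k *ᵥ (xs i)))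
                        + ((v k) ⬝ᵥ (xs i)) + w k))}
          ∂(Measure.pi fun _ : Fin N =>
              ((1 / 2 : ℝ≥0∞) • Measure.dirac (1 : ℝ)
                + (1 / 2 : ℝ≥0∞) • Measure.dirac (-1 : ℝ))))
        ∂(Measure.pi fun _ : Fin N => p))
      ≤ C / Real.sqrt (N : ℝ) := by
  classical
  haveI := hp
  have hA : 0 < A := lt_of_lt_of_le ha haA
  have huH : 0 < uHigh := lt_of_lt_of_le huLow hu
  set wlo := wLow + Real.log a with hwlo
  set whi := wHigh + Real.log A with hwhi
  have hwlohi : wlo ≤ whi := by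
    have := Real.log_le_log ha haA
    simp only [hwlo, hwhi]; linarith
  set wB := max |wlo| |whi| with hwBdef
  have hwB0 : (0:ℝ) ≤ wB := le_trans (abs_nonneg _) (le_max_left _ _)
  set m₀ := -(V * P) + wlo with hm₀
  set M₀ := uHigh * P ^ 2 + V * P + whi with hM₀
  set Cfin := uHigh * (D:ℝ) ^ 2 * P ^ 2 + V * ((D:ℝ) * P) + wB with hCfin
  have hCfin0 : 0 ≤ Cfin := by
    have h1 : (0:ℝ) ≤ uHigh * (D:ℝ)^2 * P^2 := by positivity
    have h2 : (0:ℝ) ≤ V * ((D:ℝ) * P) := by positivity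
    simp only [hCfin]; linarith
  set C := Real.exp (-m₀) * ((K:ℝ) * (Real.exp M₀ * Cfin)) with hCdef
  have hC0 : 0 ≤ C := by
    have hk : (0:ℝ) ≤ (K:ℝ) := Nat.cast_nonneg K
    rw [hCdef]
    exact mul_nonneg (Real.exp_pos _).le
      (mul_nonneg hk (mul_nonneg (Real.exp_pos _).le hCfin0))
  refine ⟨C, fun N hN => ?_⟩
  have hNpos : (0:ℝ) < N := by exact_mod_cast Nat.lt_of_lt_of_le Nat.zero_lt_one hN
  have hsqN : (0:ℝ) < Real.sqrt N := Real.sqrt_pos.mpr hNpos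
  haveI hPF : Nonempty (PFull D K uLow uHigh V wLow wHigh a A) :=
    nonempty_PFull hu hV.le hw haA
  haveI hPR : Nonempty (PRed D K uLow uHigh V wlo whi) :=
    nonempty_PRed hu hV.le hwlohi
  -- the indexed family of functions
  set F : PFull D K uLow uHigh V wLow wHigh a A → (Fin N → (Fin D → ℝ)) → (Fin N → ℝ) → ℝ :=
    fun θ xs sg => (1 / (N : ℝ)) * ∑ i, sg i *
      Real.log (∑ k, θ.1.1 k *
        Real.exp (((xs i) ⬝ᵥ (θ.1.2.1 k *ᵥ (xs i))) + ((θ.1.2.2.1 k) ⬝ᵥ (xs i)) + θ.1.2.2.2 k))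
    with hF
  set H : (Fin N → (Fin D → ℝ)) → (Fin N → ℝ) → ℝ := fun xs sg => ⨆ θ, F θ xs sg with hH
  -- identification of the sSup with the iSup
  have hsup_eq : ∀ (xs : Fin N → (Fin D → ℝ)) (sg : Fin N → ℝ),
      sSup {t : ℝ | ∃ (α : Fin K → ℝ) (Umat : Fin K → Matrix (Fin D) (Fin D) ℝ)
              (v : Fin K → (Fin D → ℝ)) (w : Fin K → ℝ),
              (∀ k, (Umat k).IsSymm) ∧
              (∀ k, (Umat k - uLow • (1 : Matrix (Fin D) (Fin D) ℝ)).PosSemidef) ∧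
              (∀ k, (uHigh • (1 : Matrix (Fin D) (Fin D) ℝ) - Umat k).PosSemidef) ∧
              (∀ k, Real.sqrt ((v k) ⬝ᵥ (v k)) ≤ V) ∧
              (∀ k, wLow ≤ w k ∧ w k ≤ wHigh) ∧
              (∀ k, a ≤ α k ∧ α k ≤ A) ∧
              t = (1 / (N : ℝ)) * ∑ i, sg i *
                    Real.log (∑ k, α k *
                      Real.exp (((xs i) ⬝ᵥ (Umat k *ᵥ (xs i)))
                        + ((v k) ⬝ᵥ (xs i)) + w k))} = H xs sg := by
    intro xs sg
    have hseteq : {t : ℝ | ∃ (α : Fin K → ℝ) (Umat : Fin K → Matrix (Fin D) (Fin D) ℝ)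
              (v : Fin K → (Fin D → ℝ)) (w : Fin K → ℝ),
              (∀ k, (Umat k).IsSymm) ∧
              (∀ k, (Umat k - uLow • (1 : Matrix (Fin D) (Fin D) ℝ)).PosSemidef) ∧
              (∀ k, (uHigh • (1 : Matrix (Fin D) (Fin D) ℝ) - Umat k).PosSemidef) ∧
              (∀ k, Real.sqrt ((v k) ⬝ᵥ (v k)) ≤ V) ∧
              (∀ k, wLow ≤ w k ∧ w k ≤ wHigh) ∧
              (∀ k, a ≤ α k ∧ α k ≤ A) ∧
              t = (1 / (N : ℝ)) * ∑ i, sg i *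
                    Real.log (∑ k, α k *
                      Real.exp (((xs i) ⬝ᵥ (Umat k *ᵥ (xs i)))
                        + ((v k) ⬝ᵥ (xs i)) + w k))}
        = Set.range (fun θ => F θ xs sg) := by
      ext t
      constructor
      · rintro ⟨α, U, v, w, h1, h2, h3, h4, h5, h6, h7⟩
        exact ⟨⟨(α, U, v, w), h1, h2, h3, h4, h5, h6⟩, h7.symm⟩
      · rintro ⟨⟨⟨α, U, v, w⟩, h1, h2, h3, h4, h5, h6⟩, rfl⟩
        exact ⟨α, U, v, w, h1, h2, h3, h4, h5, h6, rfl⟩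
    rw [hseteq, hH]
    rfl
  -- uniform (in θ) bound on the log terms, for arbitrary xs
  set Mlog : (Fin N → (Fin D → ℝ)) → Fin N → ℝ := fun xs i =>
    |Real.log a + (-(V * Real.sqrt (xs i ⬝ᵥ xs i)) + wLow)|
      + |Real.log ((K:ℝ) * A) + (uHigh * (Real.sqrt (xs i ⬝ᵥ xs i))^2
          + V * Real.sqrt (xs i ⬝ᵥ xs i) + wHigh)| with hMlog
  have hMlog0 : ∀ xs i, 0 ≤ Mlog xs i := fun xs i => by
    rw [hMlog]; positivity
  have hFabs : ∀ (xs : Fin N → (Fin D → ℝ)) (θ : PFull D K uLow uHigh V wLow wHigh a A)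
      (i : Fin N),
      |Real.log (∑ k, θ.1.1 k *
        Real.exp (((xs i) ⬝ᵥ (θ.1.2.1 k *ᵥ (xs i))) + ((θ.1.2.2.1 k) ⬝ᵥ (xs i)) + θ.1.2.2.2 k))|
        ≤ Mlog xs i := by
    intro xs θ i
    have hEk : ∀ k, -(V * Real.sqrt (xs i ⬝ᵥ xs i)) + wLow
        ≤ ((xs i) ⬝ᵥ (θ.1.2.1 k *ᵥ (xs i))) + ((θ.1.2.2.1 k) ⬝ᵥ (xs i)) + θ.1.2.2.2 k ∧
        ((xs i) ⬝ᵥ (θ.1.2.1 k *ᵥ (xs i))) + ((θ.1.2.2.1 k) ⬝ᵥ (xs i)) + θ.1.2.2.2 k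
          ≤ uHigh * (Real.sqrt (xs i ⬝ᵥ xs i))^2 + V * Real.sqrt (xs i ⬝ᵥ xs i) + wHigh := by
      intro k
      have hEb := Ebounds huLow.le hV.le (θ.2.2.1 k) (θ.2.2.2.1 k) (θ.2.2.2.2.1 k) (xs i)
      have hwk := θ.2.2.2.2.2.1 k
      constructor
      · have := hEb.1; linarith [hwk.1]
      · have := hEb.2; linarith [hwk.2]
    have hls := logsum_bounds hK ha haA (fun k => θ.1.1 k) (fun k => θ.2.2.2.2.2.2 k)
      (fun k => ((xs i) ⬝ᵥ (θ.1.2.1 k *ᵥ (xs i))) + ((θ.1.2.2.1 k) ⬝ᵥ (xs i)) + θ.1.2.2.2 k)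
      _ _ hEk
    rw [hMlog]
    exact abs_le_interval hls.1 hls.2
  -- bddAbove of the F-family at each sg
  have hbddF : ∀ (xs : Fin N → (Fin D → ℝ)) (sg : Fin N → ℝ),
      BddAbove (Set.range fun θ => F θ xs sg) := by
    intro xs sg
    refine bdd_range _ (∑ i, |sg i| * Mlog xs i) fun θ => ?_
    have h1 : |F θ xs sg| ≤ ∑ i, |sg i| * Mlog xs i := by
      rw [hF]
      simp only []
      rw [abs_mul]
      have h2 : |(1:ℝ) / (N:ℝ)| ≤ 1 := by
        rw [abs_of_pos (by positivity)]
        rw [div_le_one hNpos]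
        exact_mod_cast hN
      calc |(1:ℝ) / (N:ℝ)| * |∑ i, sg i * Real.log _| ≤ 1 * |∑ i, sg i *
            Real.log (∑ k, θ.1.1 k *
              Real.exp (((xs i) ⬝ᵥ (θ.1.2.1 k *ᵥ (xs i))) + ((θ.1.2.2.1 k) ⬝ᵥ (xs i))
                + θ.1.2.2.2 k))| :=
            mul_le_mul_of_nonneg_right h2 (abs_nonneg _)
        _ = |∑ i, sg i * Real.log (∑ k, θ.1.1 k *
              Real.exp (((xs i) ⬝ᵥ (θ.1.2.1 k *ᵥ (xs i))) + ((θ.1.2.2.1 k) ⬝ᵥ (xs i))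
                + θ.1.2.2.2 k))| := one_mul _
        _ ≤ ∑ i, |sg i * Real.log (∑ k, θ.1.1 k *
              Real.exp (((xs i) ⬝ᵥ (θ.1.2.1 k *ᵥ (xs i))) + ((θ.1.2.2.1 k) ⬝ᵥ (xs i))
                + θ.1.2.2.2 k))| := Finset.abs_sum_le_sum_abs _ _
        _ ≤ ∑ i, |sg i| * Mlog xs i := by
            refine Finset.sum_le_sum fun i _ => ?_
            rw [abs_mul]
            exact mul_le_mul_of_nonneg_left (hFabs xs θ i) (abs_nonneg _)
    exact le_trans (le_abs_self _) h1
  -- Lipschitz continuity of H xs, hence strong measurability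
  have hHsm : ∀ xs : Fin N → (Fin D → ℝ), StronglyMeasurable (H xs) := by
    intro xs
    set c : ℝ := ∑ i, Mlog xs i with hc
    have hc0 : 0 ≤ c := Finset.sum_nonneg fun i _ => hMlog0 xs i
    have hFdiff : ∀ (θ : PFull D K uLow uHigh V wLow wHigh a A) (sg sg' : Fin N → ℝ),
        |F θ xs sg - F θ xs sg'| ≤ c * dist sg sg' := by
      intro θ sg sg'
      have hd : F θ xs sg - F θ xs sg' = (1 / (N:ℝ)) * ∑ i, (sg i - sg' i) *
          Real.log (∑ k, θ.1.1 k *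
            Real.exp (((xs i) ⬝ᵥ (θ.1.2.1 k *ᵥ (xs i))) + ((θ.1.2.2.1 k) ⬝ᵥ (xs i))
              + θ.1.2.2.2 k)) := by
        rw [hF]
        simp only []
        rw [← mul_sub, ← Finset.sum_sub_distrib]
        congr 1
        exact Finset.sum_congr rfl fun i _ => by ring
      rw [hd, abs_mul]
      have h2 : |(1:ℝ) / (N:ℝ)| ≤ 1 := by
        rw [abs_of_pos (by positivity), div_le_one hNpos]
        exact_mod_cast hN
      calc |(1:ℝ) / (N:ℝ)| * |∑ i, (sg i - sg' i) * Real.log _|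
          ≤ 1 * |∑ i, (sg i - sg' i) * Real.log (∑ k, θ.1.1 k *
            Real.exp (((xs i) ⬝ᵥ (θ.1.2.1 k *ᵥ (xs i))) + ((θ.1.2.2.1 k) ⬝ᵥ (xs i))
              + θ.1.2.2.2 k))| := mul_le_mul_of_nonneg_right h2 (abs_nonneg _)
        _ = |∑ i, (sg i - sg' i) * Real.log (∑ k, θ.1.1 k *
            Real.exp (((xs i) ⬝ᵥ (θ.1.2.1 k *ᵥ (xs i))) + ((θ.1.2.2.1 k) ⬝ᵥ (xs i))
              + θ.1.2.2.2 k))| := one_mul _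
        _ ≤ ∑ i, |(sg i - sg' i) * Real.log (∑ k, θ.1.1 k *
            Real.exp (((xs i) ⬝ᵥ (θ.1.2.1 k *ᵥ (xs i))) + ((θ.1.2.2.1 k) ⬝ᵥ (xs i))
              + θ.1.2.2.2 k))| := Finset.abs_sum_le_sum_abs _ _
        _ ≤ ∑ i, dist sg sg' * Mlog xs i := by
            refine Finset.sum_le_sum fun i _ => ?_
            rw [abs_mul]
            have hdist : |sg i - sg' i| ≤ dist sg sg' := by
              rw [← Real.dist_eq]
              exact dist_le_pi_dist sg sg' i
            exact mul_le_mul hdist (hFabs xs θ i) (abs_nonneg _) dist_nonneg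
        _ = c * dist sg sg' := by
            rw [hc, Finset.sum_mul]
            exact Finset.sum_congr rfl fun i _ => by ring
    have hkey : ∀ sg sg', H xs sg ≤ H xs sg' + c * dist sg sg' := by
      intro sg sg'
      rw [hH]
      refine ciSup_le fun θ => ?_
      have h1 : F θ xs sg ≤ F θ xs sg' + c * dist sg sg' := by
        have := hFdiff θ sg sg'
        have := le_abs_self (F θ xs sg - F θ xs sg')
        linarith
      exact le_trans h1 (add_le_add_left (le_ciSup (hbddF xs sg') θ) _)
    have hlip : LipschitzWith (Real.toNNReal c) (H xs) := by
      refine LipschitzWith.of_dist_le_mul fun sg sg' => ?_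
      rw [Real.dist_eq, abs_sub_le_iff]
      constructor
      · have := hkey sg sg'
        have hle : c * dist sg sg' ≤ (Real.toNNReal c : ℝ) * dist sg sg' :=
          mul_le_mul_of_nonneg_right (Real.le_coe_toNNReal c) dist_nonneg
        linarith
      · have := hkey sg' sg
        rw [dist_comm sg' sg] at this
        have hle : c * dist sg sg' ≤ (Real.toNNReal c : ℝ) * dist sg sg' :=
          mul_le_mul_of_nonneg_right (Real.le_coe_toNNReal c) dist_nonneg
        linarith
    exact hlip.continuous.stronglyMeasurable
  -- the main bound for samples inside the ball
  have hmain : ∀ xs : Fin N → (Fin D → ℝ), (∀ i, Real.sqrt (xs i ⬝ᵥ xs i) ≤ P) →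
      ((2:ℝ)^N)⁻¹ * ∑ s : Fin N → Bool, H xs (fun i => eps (s i)) ≤ C / Real.sqrt N := by
    intro xs hxs
    have hx2 : ∀ i, (Real.sqrt (xs i ⬝ᵥ xs i))^2 ≤ P^2 := fun i =>
      pow_le_pow_left₀ (Real.sqrt_nonneg _) (hxs i) 2
    have hE'low : ∀ (θ : PRed D K uLow uHigh V wlo whi) (k : Fin K) (i : Fin N),
        m₀ ≤ xs i ⬝ᵥ (θ.1.1 k *ᵥ xs i) + θ.1.2.1 k ⬝ᵥ xs i + θ.1.2.2 k := by
      intro θ k i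
      have hEb := Ebounds huLow.le hV.le (θ.2.2.1 k) (θ.2.2.2.1 k) (θ.2.2.2.2.1 k) (xs i)
      have hwk := (θ.2.2.2.2.2 k).1
      have hVr : V * Real.sqrt (xs i ⬝ᵥ xs i) ≤ V * P :=
        mul_le_mul_of_nonneg_left (hxs i) hV.le
      rw [hm₀]
      have := hEb.1
      linarith
    have hE'high : ∀ (θ : PRed D K uLow uHigh V wlo whi) (k : Fin K) (i : Fin N),
        xs i ⬝ᵥ (θ.1.1 k *ᵥ xs i) + θ.1.2.1 k ⬝ᵥ xs i + θ.1.2.2 k ≤ M₀ := by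
      intro θ k i
      have hEb := Ebounds huLow.le hV.le (θ.2.2.1 k) (θ.2.2.2.1 k) (θ.2.2.2.2.1 k) (xs i)
      have hwk := (θ.2.2.2.2.2 k).2
      have hVr : V * Real.sqrt (xs i ⬝ᵥ xs i) ≤ V * P :=
        mul_le_mul_of_nonneg_left (hxs i) hV.le
      have hur : uHigh * (Real.sqrt (xs i ⬝ᵥ xs i))^2 ≤ uHigh * P^2 :=
        mul_le_mul_of_nonneg_left (hx2 i) huH.le
      rw [hM₀]
      have := hEb.2
      linarith
    -- bound on reduced log-sums for bddAbove
    have hlogR : ∀ (θ : PRed D K uLow uHigh V wlo whi) (i : Fin N),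
        |Real.log (∑ k, Real.exp (xs i ⬝ᵥ (θ.1.1 k *ᵥ xs i) + θ.1.2.1 k ⬝ᵥ xs i
          + θ.1.2.2 k))| ≤ |Real.log 1 + m₀| + |Real.log ((K:ℝ) * 1) + M₀| := by
      intro θ i
      have hone : (∑ k, Real.exp (xs i ⬝ᵥ (θ.1.1 k *ᵥ xs i) + θ.1.2.1 k ⬝ᵥ xs i + θ.1.2.2 k))
          = ∑ k, (1:ℝ) * Real.exp (xs i ⬝ᵥ (θ.1.1 k *ᵥ xs i) + θ.1.2.1 k ⬝ᵥ xs i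
            + θ.1.2.2 k) := by simp
      rw [hone]
      have hls := logsum_bounds hK one_pos le_rfl (fun _ => (1:ℝ)) (fun k => ⟨le_rfl, le_rfl⟩)
        (fun k => xs i ⬝ᵥ (θ.1.1 k *ᵥ xs i) + θ.1.2.1 k ⬝ᵥ xs i + θ.1.2.2 k) m₀ M₀
        (fun k => ⟨hE'low θ k i, hE'high θ k i⟩)
      exact abs_le_interval hls.1 hls.2
    have hbddR : ∀ s : Fin N → Bool,
        BddAbove (Set.range fun θ : PRed D K uLow uHigh V wlo whi =>
          ∑ i, eps (s i) * Real.log (∑ k, Real.exp (xs i ⬝ᵥ (θ.1.1 k *ᵥ xs i)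
            + θ.1.2.1 k ⬝ᵥ xs i + θ.1.2.2 k))) := by
      intro s
      refine bdd_range _ ((N:ℝ) * (|Real.log 1 + m₀| + |Real.log ((K:ℝ) * 1) + M₀|)) fun θ => ?_
      calc ∑ i, eps (s i) * Real.log (∑ k, Real.exp (xs i ⬝ᵥ (θ.1.1 k *ᵥ xs i)
            + θ.1.2.1 k ⬝ᵥ xs i + θ.1.2.2 k))
          ≤ ∑ _i : Fin N, (|Real.log 1 + m₀| + |Real.log ((K:ℝ) * 1) + M₀|) := by
            refine Finset.sum_le_sum fun i _ => ?_
            calc eps (s i) * Real.log _ ≤ |eps (s i) * Real.log (∑ k, Real.exp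
                  (xs i ⬝ᵥ (θ.1.1 k *ᵥ xs i) + θ.1.2.1 k ⬝ᵥ xs i + θ.1.2.2 k))| :=
                  le_abs_self _
              _ = |Real.log (∑ k, Real.exp (xs i ⬝ᵥ (θ.1.1 k *ᵥ xs i) + θ.1.2.1 k ⬝ᵥ xs i
                  + θ.1.2.2 k))| := by rw [abs_mul, eps_abs, one_mul]
              _ ≤ _ := hlogR θ i
        _ = (N:ℝ) * (|Real.log 1 + m₀| + |Real.log ((K:ℝ) * 1) + M₀|) := by
            simp [Finset.card_univ]
            ring
    -- reduction from PFull to PRed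
    have hred : ∀ s : Fin N → Bool, H xs (fun i => eps (s i))
        ≤ (1/(N:ℝ)) * ⨆ θ : PRed D K uLow uHigh V wlo whi,
            ∑ i, eps (s i) * Real.log (∑ k, Real.exp (xs i ⬝ᵥ (θ.1.1 k *ᵥ xs i)
              + θ.1.2.1 k ⬝ᵥ xs i + θ.1.2.2 k)) := by
      intro s
      rw [hH]
      refine ciSup_le fun θf => ?_
      have hαpos : ∀ k, 0 < θf.1.1 k := fun k => lt_of_lt_of_le ha (θf.2.2.2.2.2.2 k).1
      have hwr : ∀ k, wlo ≤ θf.1.2.2.2 k + Real.log (θf.1.1 k) ∧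
          θf.1.2.2.2 k + Real.log (θf.1.1 k) ≤ whi := by
        intro k
        have h1 := (θf.2.2.2.2.2.1 k)
        have h2 := (θf.2.2.2.2.2.2 k)
        have hl1 : Real.log a ≤ Real.log (θf.1.1 k) := Real.log_le_log ha h2.1
        have hl2 : Real.log (θf.1.1 k) ≤ Real.log A := Real.log_le_log (hαpos k) h2.2
        rw [hwlo, hwhi]
        constructor <;> linarith [h1.1, h1.2]
      set θr : PRed D K uLow uHigh V wlo whi :=
        ⟨(θf.1.2.1, θf.1.2.2.1, fun k => θf.1.2.2.2 k + Real.log (θf.1.1 k)),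
          θf.2.1, θf.2.2.1, θf.2.2.2.1, θf.2.2.2.2.1, hwr⟩ with hθr
      have hval : F θf xs (fun i => eps (s i)) = (1/(N:ℝ)) * ∑ i, eps (s i) *
          Real.log (∑ k, Real.exp (xs i ⬝ᵥ (θr.1.1 k *ᵥ xs i) + θr.1.2.1 k ⬝ᵥ xs i
            + θr.1.2.2 k)) := by
        rw [hF]
        simp only []
        congr 1
        refine Finset.sum_congr rfl fun i _ => ?_
        congr 2
        refine Finset.sum_congr rfl fun k _ => ?_
        show θf.1.1 k * Real.exp (((xs i) ⬝ᵥ (θf.1.2.1 k *ᵥ (xs i)))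
            + ((θf.1.2.2.1 k) ⬝ᵥ (xs i)) + θf.1.2.2.2 k)
          = Real.exp (((xs i) ⬝ᵥ (θf.1.2.1 k *ᵥ (xs i))) + ((θf.1.2.2.1 k) ⬝ᵥ (xs i))
            + (θf.1.2.2.2 k + Real.log (θf.1.1 k)))
        simp only [Real.exp_add, Real.exp_log (hαpos k)]
        ring
      rw [hval]
      refine mul_le_mul_of_nonneg_left (le_ciSup (hbddR s) θr) (by positivity)
    -- apply heart
    have hentry : ∀ (θ : PRed D K uLow uHigh V wlo whi) (k : Fin K) (j l : Fin D),
        |θ.1.1 k j l| ≤ uHigh := fun θ k j l =>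
      entry_bound (θ.2.1 k) huLow.le (θ.2.2.1 k) (θ.2.2.2.1 k) j l
    have hvcomp : ∀ (θ : PRed D K uLow uHigh V wlo whi) (k : Fin K) (j : Fin D),
        |θ.1.2.1 k j| ≤ V := fun θ k j =>
      le_trans (abs_comp_le _ j) (θ.2.2.2.2.1 k)
    have hwcomp : ∀ (θ : PRed D K uLow uHigh V wlo whi) (k : Fin K),
        |θ.1.2.2 k| ≤ wB := by
      intro θ k
      have h := θ.2.2.2.2.2 k
      rw [abs_le]
      constructor
      · have h1 : -wB ≤ -|wlo| := neg_le_neg (le_max_left _ _)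
        have h2 := neg_abs_le wlo
        linarith [h.1]
      · have h1 : |whi| ≤ wB := le_max_right _ _
        have h2 := le_abs_self whi
        linarith [h.2]
    have hheart := heart (Θ := PRed D K uLow uHigh V wlo whi) hK
      (fun θ => θ.1.1) (fun θ => θ.1.2.1) (fun θ => θ.1.2.2)
      (fun θ k i => xs i ⬝ᵥ (θ.1.1 k *ᵥ xs i) + θ.1.2.1 k ⬝ᵥ xs i + θ.1.2.2 k)
      uHigh V wB P m₀ M₀ hP.le huH.le hV.le hwB0 xs hxs (fun θ k i => rfl)
      hentry hvcomp hwcomp hE'low hE'high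
    have hheart' : ∑ s : Fin N → Bool, ⨆ θ : PRed D K uLow uHigh V wlo whi,
        ∑ i, eps (s i) * Real.log (∑ k, Real.exp (xs i ⬝ᵥ (θ.1.1 k *ᵥ xs i)
          + θ.1.2.1 k ⬝ᵥ xs i + θ.1.2.2 k))
        ≤ 2 ^ N * Real.sqrt N * C := by
      rw [hCdef, hCfin]
      exact hheart
    calc ((2:ℝ)^N)⁻¹ * ∑ s : Fin N → Bool, H xs (fun i => eps (s i))
        ≤ ((2:ℝ)^N)⁻¹ * ∑ s : Fin N → Bool, ((1/(N:ℝ)) *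
            ⨆ θ : PRed D K uLow uHigh V wlo whi,
              ∑ i, eps (s i) * Real.log (∑ k, Real.exp (xs i ⬝ᵥ (θ.1.1 k *ᵥ xs i)
                + θ.1.2.1 k ⬝ᵥ xs i + θ.1.2.2 k))) := by
          refine mul_le_mul_of_nonneg_left (Finset.sum_le_sum fun s _ => hred s) (by positivity)
      _ = ((2:ℝ)^N)⁻¹ * ((1/(N:ℝ)) * ∑ s : Fin N → Bool,
            ⨆ θ : PRed D K uLow uHigh V wlo whi,
              ∑ i, eps (s i) * Real.log (∑ k, Real.exp (xs i ⬝ᵥ (θ.1.1 k *ᵥ xs i)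
                + θ.1.2.1 k ⬝ᵥ xs i + θ.1.2.2 k))) := by
          simp only [Finset.mul_sum]
      _ ≤ ((2:ℝ)^N)⁻¹ * ((1/(N:ℝ)) * (2 ^ N * Real.sqrt N * C)) := by
          refine mul_le_mul_of_nonneg_left ?_ (by positivity)
          exact mul_le_mul_of_nonneg_left hheart' (by positivity)
      _ = C / Real.sqrt N := by
          have h2N : ((2:ℝ)^N) ≠ 0 := by positivity
          have hNne : (N:ℝ) ≠ 0 := ne_of_gt hNpos
          have hsN : Real.sqrt N ≠ 0 := ne_of_gt hsqN
          have hss : Real.sqrt N * Real.sqrt N = (N:ℝ) := Real.mul_self_sqrt hNpos.le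
          have h1N : (1/(N:ℝ)) = 1/(Real.sqrt N * Real.sqrt N) := by rw [hss]
          rw [h1N]
          field_simp
  -- almost everywhere the samples are in the ball
  have hgood : ∀ᵐ xs ∂(Measure.pi fun _ : Fin N => p),
      ∀ i, Real.sqrt (xs i ⬝ᵥ xs i) ≤ P := by
    rw [ae_all_iff]
    intro i
    have hbad : p {x : Fin D → ℝ | ¬ Real.sqrt (x ⬝ᵥ x) ≤ P} = 0 := ae_iff.mp hsupp
    rw [ae_iff]
    exact Measure.pi_eval_preimage_null (μ := fun _ : Fin N => p) (i := i) hbad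
  -- rewrite the goal
  simp only [hsup_eq]
  have hrw : ∀ xs : Fin N → (Fin D → ℝ),
      (∫ sg, H xs sg ∂(Measure.pi fun _ : Fin N =>
          ((1 / 2 : ℝ≥0∞) • Measure.dirac (1 : ℝ)
            + (1 / 2 : ℝ≥0∞) • Measure.dirac (-1 : ℝ))))
        = ((2:ℝ)^N)⁻¹ * ∑ s : Fin N → Bool, H xs (fun i => eps (s i)) :=
    fun xs => integral_pi_sign (H xs) (hHsm xs)
  simp only [hrw]
  -- final integral bound
  by_cases hI : Integrable (fun xs : Fin N → (Fin D → ℝ) =>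
      ((2:ℝ)^N)⁻¹ * ∑ s : Fin N → Bool, H xs (fun i => eps (s i)))
      (Measure.pi fun _ : Fin N => p)
  · have hmono := integral_mono_ae hI (integrable_const (C / Real.sqrt N))
      (hgood.mono fun xs hxs => hmain xs hxs)
    calc ∫ xs : Fin N → (Fin D → ℝ), ((2:ℝ)^N)⁻¹ * ∑ s : Fin N → Bool,
          H xs (fun i => eps (s i)) ∂(Measure.pi fun _ : Fin N => p)
        ≤ ∫ _xs : Fin N → (Fin D → ℝ), C / Real.sqrt N
            ∂(Measure.pi fun _ : Fin N => p) := hmono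
      _ = C / Real.sqrt N := by
          rw [integral_const]
          simp [measure_univ]
  · rw [integral_undef hI]
    exact div_nonneg hC0 (Real.sqrt_nonneg _)
end
end
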